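/- arXiv:2506.18712 — 7 statements merged into one kernel-verified Lean document; each statement's English description precedes it below -/
import Mathlib

section
/- For every complex number q with |q| < 1, the double Lambert series f2(q) := Σ_{k≥1} Σ_{ℓ≥1} (k+ℓ) q^{k+ℓ+kℓ} / ((1-q^k)(1-q^ℓ)) and f3(q) := Σ_{k≥1} Σ_{ℓ>k} 2k q^{k+ℓ} / ((1-q^k)(1-q^ℓ)) are equal: f2(q) = f3(q). -/
/-!
With `L n = q ^ n / (1 - q ^ n)`, the summand of `f2` is `P k l + P l k`, where
`P k l = k L(k) q^(kl) L(l)` is `lambertPair`; by absolute convergence `f2 = 2 ∑_{k,l} P k l`.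
Expanding `L(l)` geometrically, `∑_l q^(kl) L(l) = ∑_{l,m ≥ 1} q^(l(k+m))`, and summing over `l`
first gives `∑_{m ≥ 1} L(k+m)`, which turns `2 ∑_l P k l` into the inner sum of `f3`.
-/

theorem Summable.tsum_add_comp_swap {α M : Type*} [AddCommMonoid M] [TopologicalSpace M]
    [ContinuousAdd M] [T2Space M] {f : α × α → M} (hf : Summable f) :
    ∑' p, (f p + f p.swap) = 2 • ∑' p, f p := by
  rw [hf.tsum_add hf.prod_symm, two_nsmul]
  exact congrArg _ ((Equiv.prodComm α α).tsum_eq f)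

noncomputable def lambertTerm {𝕜 : Type*} [DivisionRing 𝕜] (q : 𝕜) (n : ℕ) : 𝕜 :=
  q ^ n / (1 - q ^ n)

section Field

variable {𝕜 : Type*} [Field 𝕜] (q : 𝕜)

noncomputable def lambertPair (a b : ℕ) : 𝕜 :=
  a * lambertTerm q a * (q ^ (a * b) * lambertTerm q b)

lemma add_mul_pow_div_eq_lambertPair_add (a b : ℕ) :
    ((a : 𝕜) + b) * q ^ (a + b + a * b) / ((1 - q ^ a) * (1 - q ^ b)) =
      lambertPair q a b + lambertPair q b a := by
  simp only [lambertPair, lambertTerm, div_eq_mul_inv, mul_inv, pow_add, mul_comm b a]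
  ring

lemma two_mul_mul_pow_div_eq_lambertTerm (a b : ℕ) :
    2 * (a : 𝕜) * q ^ (a + b) / ((1 - q ^ a) * (1 - q ^ b)) =
      2 * (a * lambertTerm q a) * lambertTerm q b := by
  simp only [lambertTerm, div_eq_mul_inv, mul_inv, pow_add]
  ring

end Field

section NormedField

variable {𝕜 : Type*} [NormedField 𝕜] {q : 𝕜}

lemma lambertTerm_eq_tsum (hq : ‖q‖ < 1) {n : ℕ} (hn : n ≠ 0) :
    lambertTerm q n = ∑' m : ℕ, q ^ (n * (m + 1)) := by
  have hqn : ‖q ^ n‖ < 1 := by rw [norm_pow]; exact pow_lt_one₀ (norm_nonneg q) hq hn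
  simp_rw [pow_mul, pow_succ', tsum_mul_left, tsum_geometric_of_norm_lt_one hqn, lambertTerm,
    div_eq_mul_inv]

variable [CompleteSpace 𝕜]

lemma summable_pow_succ_mul_add_succ (hq : ‖q‖ < 1) (k : ℕ) :
    Summable fun p : ℕ × ℕ ↦ q ^ ((p.1 + 1) * (k + p.2 + 1)) := by
  refine Summable.of_norm_bounded ((summable_norm_geometric_of_norm_lt_one hq).mul_norm
    (summable_norm_geometric_of_norm_lt_one hq)) fun p ↦ ?_
  rw [← pow_add, norm_pow, norm_pow]
  exact pow_le_pow_of_le_one (norm_nonneg q) hq.le (by nlinarith)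

theorem tsum_pow_mul_lambertTerm_succ (hq : ‖q‖ < 1) (k : ℕ) :
    ∑' l : ℕ, q ^ (k * (l + 1)) * lambertTerm q (l + 1) =
      ∑' m : ℕ, lambertTerm q (k + m + 1) := by
  calc ∑' l : ℕ, q ^ (k * (l + 1)) * lambertTerm q (l + 1)
      = ∑' (l : ℕ) (m : ℕ), q ^ ((l + 1) * (k + m + 1)) := by
        refine tsum_congr fun l ↦ ?_
        rw [lambertTerm_eq_tsum hq l.add_one_ne_zero, ← tsum_mul_left]
        exact tsum_congr fun m ↦ by rw [← pow_add]; congr 1; ring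
    _ = ∑' (m : ℕ) (l : ℕ), q ^ ((l + 1) * (k + m + 1)) :=
        (Summable.tsum_comm (f := fun l m ↦ q ^ ((l + 1) * (k + m + 1)))
          (summable_pow_succ_mul_add_succ hq k)).symm
    _ = ∑' m : ℕ, lambertTerm q (k + m + 1) := by
        refine tsum_congr fun m ↦ ?_
        rw [lambertTerm_eq_tsum hq (k + m).add_one_ne_zero]
        exact tsum_congr fun l ↦ by rw [mul_comm]

end NormedField

lemma summable_norm_natCast_pow_mul_lambertTerm {q : ℂ} (hq : ‖q‖ < 1) (k : ℕ) :
    Summable fun n : ℕ ↦ ‖(n : ℂ) ^ k * lambertTerm q n‖ :=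
  summable_norm_iff.mpr <| by
    simpa only [lambertTerm, mul_div_assoc] using summable_norm_pow_mul_geometric_div_one_sub k hq

lemma summable_lambertPair_succ {q : ℂ} (hq : ‖q‖ < 1) :
    Summable fun p : ℕ × ℕ ↦ lambertPair q (p.1 + 1) (p.2 + 1) := by
  have hshift (k : ℕ) :=
    (summable_nat_add_iff 1).mpr (summable_norm_natCast_pow_mul_lambertTerm hq k)
  refine Summable.of_norm_bounded ((hshift 1).mul_norm (hshift 0)) fun p ↦ ?_
  have hpow : ‖q ^ ((p.1 + 1) * (p.2 + 1))‖ ≤ 1 := by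
    rw [norm_pow]; exact pow_le_one₀ (norm_nonneg q) hq.le
  simp only [lambertPair, norm_mul, pow_one, pow_zero, one_mul]
  gcongr
  exact mul_le_of_le_one_left (norm_nonneg _) hpow

/-- The double Lambert series
`f2(q) = Σ_{k≥1} Σ_{ℓ≥1} (k+ℓ) q^{k+ℓ+kℓ} / ((1-q^k)(1-q^ℓ))` and
`f3(q) = Σ_{k≥1} Σ_{ℓ>k} 2k q^{k+ℓ} / ((1-q^k)(1-q^ℓ))` are equal.
In `f3` the inner sum over `ℓ > k` is parametrized by `ℓ = k + j + 2` with `j ≥ 0`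
(here `k` ranges over `k + 1` with `k ≥ 0`). -/
theorem lambert_f2_eq_f3 (q : ℂ) (hq : ‖q‖ < 1) :
    ∑' k : ℕ, ∑' l : ℕ,
        (((k : ℂ) + 1) + ((l : ℂ) + 1)) * q ^ ((k + 1) + (l + 1) + (k + 1) * (l + 1))
          / ((1 - q ^ (k + 1)) * (1 - q ^ (l + 1)))
    = ∑' k : ℕ, ∑' j : ℕ,
        2 * ((k : ℂ) + 1) * q ^ ((k + 1) + (k + j + 2))
          / ((1 - q ^ (k + 1)) * (1 - q ^ (k + j + 2))) := by
  have hP : Summable fun p : ℕ × ℕ ↦ lambertPair q (p.1 + 1) (p.2 + 1) :=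
    summable_lambertPair_succ hq
  calc _ = ∑' k : ℕ, ∑' l : ℕ,
        (lambertPair q (k + 1) (l + 1) + lambertPair q (l + 1) (k + 1)) := by
        refine tsum_congr₂ fun k l ↦ ?_
        simpa using add_mul_pow_div_eq_lambertPair_add q (k + 1) (l + 1)
    _ = 2 • ∑' p : ℕ × ℕ, lambertPair q (p.1 + 1) (p.2 + 1) := by
        rw [← hP.tsum_add_comp_swap]
        exact (hP.add hP.prod_symm).tsum_prod.symm
    _ = ∑' k : ℕ, 2 * (((k : ℂ) + 1) * lambertTerm q (k + 1)) *
          ∑' l : ℕ, q ^ ((k + 1) * (l + 1)) * lambertTerm q (l + 1) := by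
        rw [two_nsmul, ← two_mul, hP.tsum_prod, ← tsum_mul_left]
        refine tsum_congr fun k ↦ ?_
        rw [← tsum_mul_left, ← tsum_mul_left]
        exact tsum_congr fun l ↦ by simp only [lambertPair]; push_cast; ring
    _ = _ := by
        refine tsum_congr fun k ↦ ?_
        rw [tsum_pow_mul_lambertTerm_succ hq, ← tsum_mul_left]
        refine tsum_congr fun j ↦ ?_
        rw [add_right_comm k 1 j]
        simpa using (two_mul_mul_pow_div_eq_lambertTerm q (k + 1) (k + j + 2)).symm
end

section
/- For every complex number q with |q| < 1, the following identity holds: Σ_{k≥1} Σ_{ℓ>k} k q^{ℓ} / ((1-q^k)(1-q^{ℓ})) = Σ_{k≥1} k^2 q^k/(1-q^k) − Σ_{k≥1} k q^k/(1-q^k)^2. -/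
/-!
Write `F n = q^n / (1 - q^n)` and put `a = k + 1`, `l = k + j + 2 > a`. The summand
`a q^l / ((1 - q^a)(1 - q^l))` equals both `a F l + a F a F l` and `a F a F b - a F b F l` with
`b = l - a`. Summed over all `a, b ≥ 1`, the terms `a F a F b` split along the diagonal into
`V + ∑ a F a ^ 2 + ∑_{a<l} l F a F l`, where `V = ∑_{a<l} a F a F l`, while the terms `a F b F l`
sum to `∑_{a<l} (l - a) F a F l`; so the left side `S` equals `2 V + ∑ a F a ^ 2`. The first form
gives `S = ∑_{a<l} a F l + V`; eliminating `V` leaves `S = ∑ l (l - 1) F l - ∑ a F a ^ 2`, which is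
the right side because `a q^a / (1 - q^a)^2 = a F a + a F a ^ 2`. Every series involved converges
absolutely, as `‖F n‖ ≤ ‖q‖^n / (1 - ‖q‖)`.
-/

def natProdTrichotomy : (ℕ × ℕ ⊕ ℕ) ⊕ ℕ × ℕ → ℕ × ℕ :=
  Sum.elim (Sum.elim (fun p => (p.1, p.1 + p.2 + 1)) fun k => (k, k)) fun p => (p.1 + p.2 + 1, p.1)

theorem natProdTrichotomy_bijective : Function.Bijective natProdTrichotomy := by
  constructor
  · rintro ((⟨a, b⟩ | a) | ⟨a, b⟩) ((⟨c, d⟩ | c) | ⟨c, d⟩) h <;>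
      simp only [natProdTrichotomy, Sum.elim_inl, Sum.elim_inr, Prod.mk.injEq] at h <;>
      first | omega | (congr <;> omega)
  · rintro ⟨a, b⟩
    rcases lt_trichotomy a b with h | rfl | h
    · exact ⟨.inl (.inl (a, b - a - 1)), by simp [natProdTrichotomy]; omega⟩
    · exact ⟨.inl (.inr a), rfl⟩
    · exact ⟨.inr (b, a - b - 1), by simp [natProdTrichotomy]; omega⟩

theorem Summable.tsum_prod_eq_lt_add_diag_add_gt {α : Type*} [AddCommGroup α] [UniformSpace α]
    [IsUniformAddGroup α] [CompleteSpace α] [T2Space α] {f : ℕ × ℕ → α} (hf : Summable f) :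
    ∑' p, f p = ∑' p : ℕ × ℕ, f (p.1, p.1 + p.2 + 1) + ∑' k, f (k, k)
      + ∑' p : ℕ × ℕ, f (p.1 + p.2 + 1, p.1) := by
  let e := Equiv.ofBijective _ natProdTrichotomy_bijective
  have hs := e.summable_iff.mpr hf
  have hl := hs.comp_injective Sum.inl_injective
  exact (e.hasSum_iff.mp (((hl.comp_injective Sum.inl_injective).hasSum.sum
    (hl.comp_injective Sum.inr_injective).hasSum).sum
      (hs.comp_injective Sum.inr_injective).hasSum)).tsum_eq

open Finset in
theorem Summable.tsum_prod_comp_add {α : Type*} [AddCommMonoid α] [TopologicalSpace α]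
    [ContinuousAdd α] [T3Space α] {g : ℕ → α} (hg : Summable fun p : ℕ × ℕ => g (p.1 + p.2)) :
    ∑' p : ℕ × ℕ, g (p.1 + p.2) = ∑' n, (n + 1) • g n := by
  let e := HasAntidiagonal.sigmaAntidiagonalEquivProd (A := ℕ)
  rw [← e.tsum_eq]
  refine ((e.summable_iff.mpr hg).tsum_sigma' fun _ => .of_finite).trans (tsum_congr fun n => ?_)
  rw [tsum_fintype]
  change ∑ p : antidiagonal n, g (p.1.1 + p.1.2) = _
  rw [Finset.sum_coe_sort (antidiagonal n) fun p => g (p.1 + p.2),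
    Finset.sum_congr rfl fun p hp => congrArg g (mem_antidiagonal.mp hp), sum_const,
    Nat.card_antidiagonal]

namespace LambertSeries

section Field

variable {K : Type*} [Field K] (q : K)

def term (n : ℕ) : K := q ^ n / (1 - q ^ n)

/- In the notation of the header (`F = term q`, `a = p.1 + 1`, `b = p.2 + 1`, `l = a + b`) these are
`a q^l / ((1 - q^a)(1 - q^l))`, `a F a F b`, `a F b F l` and `a F l`. -/

def pairTerm (p : ℕ × ℕ) : K :=
  ((p.1 : K) + 1) * q ^ (p.1 + p.2 + 2) / ((1 - q ^ (p.1 + 1)) * (1 - q ^ (p.1 + p.2 + 2)))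

def prodTerm (p : ℕ × ℕ) : K := ((p.1 : K) + 1) * term q (p.1 + 1) * term q (p.2 + 1)

def shiftTerm (p : ℕ × ℕ) : K := ((p.1 : K) + 1) * (term q (p.2 + 1) * term q (p.1 + p.2 + 2))

def tailTerm (p : ℕ × ℕ) : K := ((p.1 : K) + 1) * term q (p.1 + p.2 + 2)

variable {q}

theorem term_mul_term_sub_term_mul_term {a b : ℕ} (ha : 1 - q ^ a ≠ 0) (hb : 1 - q ^ b ≠ 0)
    (hab : 1 - q ^ (a + b) ≠ 0) :
    term q a * term q b - term q b * term q (a + b)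
      = q ^ (a + b) / ((1 - q ^ a) * (1 - q ^ (a + b))) := by
  rw [term, term, term, pow_add] at *
  field_simp
  ring

theorem term_add_term_mul_term {a l : ℕ} (ha : 1 - q ^ a ≠ 0) (hl : 1 - q ^ l ≠ 0) :
    term q l + term q a * term q l = q ^ l / ((1 - q ^ a) * (1 - q ^ l)) := by
  rw [term, term]
  field_simp
  ring

end Field

section NormedField

variable {K : Type*} [NormedField K] {q : K}

theorem one_sub_norm_le_norm_one_sub_pow (hq : ‖q‖ < 1) {n : ℕ} (hn : n ≠ 0) :
    1 - ‖q‖ ≤ ‖1 - q ^ n‖ :=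
  calc 1 - ‖q‖ ≤ 1 - ‖q ^ n‖ := by
        rw [norm_pow]; gcongr; exact pow_le_of_le_one (norm_nonneg q) hq.le hn
    _ ≤ ‖1 - q ^ n‖ := by simpa using norm_sub_norm_le (1 : K) (q ^ n)

theorem one_sub_pow_ne_zero (hq : ‖q‖ < 1) {n : ℕ} (hn : n ≠ 0) : 1 - q ^ n ≠ 0 :=
  norm_pos_iff.mp ((sub_pos.mpr hq).trans_le (one_sub_norm_le_norm_one_sub_pow hq hn))

theorem norm_term_le (hq : ‖q‖ < 1) {n : ℕ} (hn : n ≠ 0) :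
    ‖term q n‖ ≤ (1 - ‖q‖)⁻¹ * ‖q ^ n‖ := by
  rw [term, norm_div, div_eq_inv_mul]
  gcongr
  exact one_sub_norm_le_norm_one_sub_pow hq hn

theorem summable_norm_natCast_add_one_pow_mul_term (hq : ‖q‖ < 1) (m : ℕ) :
    Summable fun n : ℕ => ‖((n : K) + 1) ^ m * term q (n + 1)‖ := by
  have hgeom := (summable_nat_add_iff 1).mpr (summable_norm_pow_mul_geometric_of_norm_lt_one m hq)
  refine .of_nonneg_of_le (fun _ => norm_nonneg _) (fun n => ?_) (hgeom.mul_left (1 - ‖q‖)⁻¹)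
  rw [norm_mul, norm_mul, Nat.cast_succ, mul_left_comm]
  gcongr
  exact norm_term_le hq n.succ_ne_zero

theorem summable_norm_prodTerm (hq : ‖q‖ < 1) : Summable fun p => ‖prodTerm q p‖ := by
  have h1 := summable_norm_natCast_add_one_pow_mul_term hq 1
  have h0 := summable_norm_natCast_add_one_pow_mul_term hq 0
  simp only [pow_one, pow_zero, one_mul] at h1 h0
  exact (h1.mul_norm h0).congr fun p => by rw [prodTerm]

theorem pairTerm_eq_prodTerm_sub_shiftTerm (hq : ‖q‖ < 1) (p : ℕ × ℕ) :
    pairTerm q p = prodTerm q p - shiftTerm q p := by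
  have h := term_mul_term_sub_term_mul_term (one_sub_pow_ne_zero hq p.1.succ_ne_zero)
    (one_sub_pow_ne_zero hq p.2.succ_ne_zero)
    (one_sub_pow_ne_zero hq (by omega : p.1 + 1 + (p.2 + 1) ≠ 0))
  rw [show p.1 + 1 + (p.2 + 1) = p.1 + p.2 + 2 by omega] at h
  rw [pairTerm, prodTerm, shiftTerm, mul_div_assoc, ← h]
  ring

theorem pairTerm_eq_tailTerm_add_prodTerm (hq : ‖q‖ < 1) (p : ℕ × ℕ) :
    pairTerm q p = tailTerm q p + prodTerm q (p.1, p.1 + p.2 + 1) := by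
  rw [pairTerm, tailTerm, prodTerm, mul_div_assoc, ← term_add_term_mul_term
    (one_sub_pow_ne_zero hq p.1.succ_ne_zero) (one_sub_pow_ne_zero hq (by omega))]
  ring

end NormedField

section RCLike

variable {𝕜 : Type*} [RCLike 𝕜] {q : 𝕜}

theorem summable_shiftTerm (hq : ‖q‖ < 1) : Summable (shiftTerm q) := by
  have hinj : Function.Injective fun p : ℕ × ℕ => (p.1 + p.2 + 1, p.2) := by
    rintro ⟨a, b⟩ ⟨c, d⟩ h
    simp only [Prod.mk.injEq] at h ⊢
    omega
  refine .of_norm_bounded ((summable_norm_prodTerm hq).comp_injective hinj) fun p => ?_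
  have hweight : ‖(p.1 : 𝕜) + 1‖ ≤ ‖((p.1 + p.2 + 1 : ℕ) : 𝕜) + 1‖ := by
    simp only [← Nat.cast_succ, RCLike.norm_natCast]
    gcongr
    omega
  simp only [Function.comp_apply, shiftTerm, prodTerm, norm_mul]
  calc _ ≤ ‖((p.1 + p.2 + 1 : ℕ) : 𝕜) + 1‖
          * (‖term q (p.2 + 1)‖ * ‖term q (p.1 + p.2 + 2)‖) := by gcongr
    _ = _ := by ring

theorem summable_prodTerm (hq : ‖q‖ < 1) : Summable (prodTerm q) :=
  (summable_norm_prodTerm hq).of_norm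

theorem summable_prodTerm_comp_lt (hq : ‖q‖ < 1) :
    Summable fun p : ℕ × ℕ => prodTerm q (p.1, p.1 + p.2 + 1) :=
  (summable_prodTerm hq).comp_injective fun a b h => by
    simp only [Prod.mk.injEq] at h
    ext <;> omega

theorem summable_pairTerm (hq : ‖q‖ < 1) : Summable (pairTerm q) :=
  ((summable_prodTerm hq).sub (summable_shiftTerm hq)).congr fun p =>
    (pairTerm_eq_prodTerm_sub_shiftTerm hq p).symm

theorem summable_tailTerm (hq : ‖q‖ < 1) : Summable (tailTerm q) :=
  ((summable_pairTerm hq).sub (summable_prodTerm_comp_lt hq)).congr fun p => by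
    rw [pairTerm_eq_tailTerm_add_prodTerm hq, add_sub_cancel_right]

theorem tsum_prodTerm (hq : ‖q‖ < 1) :
    ∑' p, prodTerm q p = 2 * ∑' p : ℕ × ℕ, prodTerm q (p.1, p.1 + p.2 + 1)
      + ∑' k, prodTerm q (k, k) + ∑' p, shiftTerm q p := by
  have hswap : ∑' p, shiftTerm q p = ∑' p : ℕ × ℕ, shiftTerm q (p.2, p.1) :=
    ((Equiv.prodComm ℕ ℕ).tsum_eq (shiftTerm q)).symm
  have hgt : ∑' p : ℕ × ℕ, prodTerm q (p.1 + p.2 + 1, p.1)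
      = ∑' p : ℕ × ℕ, prodTerm q (p.1, p.1 + p.2 + 1) + ∑' p : ℕ × ℕ, shiftTerm q (p.2, p.1) := by
    have hswap' : Summable fun p : ℕ × ℕ => shiftTerm q (p.2, p.1) :=
      (summable_shiftTerm hq).prod_symm
    rw [← (summable_prodTerm_comp_lt hq).tsum_add hswap']
    refine tsum_congr fun p => ?_
    simp only [prodTerm, shiftTerm, Nat.add_comm p.2 p.1]
    push_cast
    ring
  rw [(summable_prodTerm hq).tsum_prod_eq_lt_add_diag_add_gt, hgt, hswap]
  ring

theorem tsum_pairTerm (hq : ‖q‖ < 1) :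
    ∑' p, pairTerm q p = 2 * ∑' p, tailTerm q p - ∑' k, prodTerm q (k, k) := by
  have hsub : ∑' p, pairTerm q p = ∑' p, prodTerm q p - ∑' p, shiftTerm q p := by
    rw [← (summable_prodTerm hq).tsum_sub (summable_shiftTerm hq)]
    exact tsum_congr (pairTerm_eq_prodTerm_sub_shiftTerm hq)
  have hadd : ∑' p, pairTerm q p
      = ∑' p, tailTerm q p + ∑' p : ℕ × ℕ, prodTerm q (p.1, p.1 + p.2 + 1) := by
    rw [← (summable_tailTerm hq).tsum_add (summable_prodTerm_comp_lt hq)]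
    exact tsum_congr (pairTerm_eq_tailTerm_add_prodTerm hq)
  linear_combination 2 * hadd - hsub - tsum_prodTerm hq

theorem two_mul_tsum_tailTerm (hq : ‖q‖ < 1) :
    2 * ∑' p, tailTerm q p = ∑' n : ℕ, ((n : 𝕜) + 1) * (((n : 𝕜) + 2) * term q (n + 2)) := by
  have hswap : Summable fun p : ℕ × ℕ => tailTerm q (p.2, p.1) :=
    (summable_tailTerm hq).prod_symm
  have hsym : ∀ p : ℕ × ℕ, tailTerm q p + tailTerm q (p.2, p.1)
      = (((p.1 + p.2 : ℕ) : 𝕜) + 2) * term q (p.1 + p.2 + 2) := by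
    rintro ⟨k, j⟩
    simp only [tailTerm, Nat.add_comm j k]
    push_cast
    ring
  have hswap_eq : ∑' p : ℕ × ℕ, tailTerm q (p.2, p.1) = ∑' p, tailTerm q p :=
    (Equiv.prodComm ℕ ℕ).tsum_eq (tailTerm q)
  let g : ℕ → 𝕜 := fun n => ((n : 𝕜) + 2) * term q (n + 2)
  have hg : Summable fun p : ℕ × ℕ => g (p.1 + p.2) :=
    ((summable_tailTerm hq).add hswap).congr hsym
  rw [two_mul]
  nth_rw 2 [← hswap_eq]
  rw [← (summable_tailTerm hq).tsum_add hswap, tsum_congr hsym]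
  refine hg.tsum_prod_comp_add.trans (tsum_congr fun n => ?_)
  rw [nsmul_eq_mul, Nat.cast_succ]

theorem summable_natCast_add_one_pow_mul_term (hq : ‖q‖ < 1) (m : ℕ) :
    Summable fun n : ℕ => ((n : 𝕜) + 1) ^ m * term q (n + 1) :=
  (summable_norm_natCast_add_one_pow_mul_term hq m).of_norm

theorem tsum_natCast_add_one_mul_div_one_sub_sq (hq : ‖q‖ < 1) :
    ∑' k : ℕ, ((k : 𝕜) + 1) * q ^ (k + 1) / (1 - q ^ (k + 1)) ^ 2
      = ∑' k : ℕ, ((k : 𝕜) + 1) * term q (k + 1) + ∑' k, prodTerm q (k, k) := by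
  have hdiag : Summable fun k => prodTerm q (k, k) :=
    (summable_prodTerm hq).comp_injective fun a b h => (Prod.mk.inj h).1
  have hlin := summable_natCast_add_one_pow_mul_term hq 1
  simp only [pow_one] at hlin
  rw [← hlin.tsum_add hdiag]
  refine tsum_congr fun k => ?_
  have hk := one_sub_pow_ne_zero hq k.succ_ne_zero
  rw [prodTerm, mul_div_assoc, sq, ← term_add_term_mul_term hk hk]
  ring

theorem tsum_natCast_add_one_mul_natCast_add_two_mul_term (hq : ‖q‖ < 1) :
    ∑' n : ℕ, ((n : 𝕜) + 1) * (((n : 𝕜) + 2) * term q (n + 2))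
      = ∑' k : ℕ, ((k : 𝕜) + 1) ^ 2 * term q (k + 1)
        - ∑' k : ℕ, ((k : 𝕜) + 1) * term q (k + 1) := by
  have hlin := summable_natCast_add_one_pow_mul_term hq 1
  simp only [pow_one] at hlin
  have hsub := (summable_natCast_add_one_pow_mul_term hq 2).sub hlin
  rw [← (summable_natCast_add_one_pow_mul_term hq 2).tsum_sub hlin, hsub.tsum_eq_zero_add]
  simp only [Nat.cast_zero, zero_add, one_pow, one_mul, sub_self, Nat.cast_succ]
  refine tsum_congr fun n => ?_
  ring

end RCLike

end LambertSeries

/-- `Σ_{k≥1} Σ_{ℓ>k} k q^ℓ / ((1-q^k)(1-q^ℓ))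
      = Σ_{k≥1} k^2 q^k/(1-q^k) − Σ_{k≥1} k q^k/(1-q^k)^2`.
The inner sum over `ℓ > k` is parametrized by `ℓ = k + j + 2` with `j ≥ 0`
(here `k` ranges over `k + 1` with `k ≥ 0`). -/
theorem lambert_double_sum_identity (q : ℂ) (hq : ‖q‖ < 1) :
    ∑' k : ℕ, ∑' j : ℕ,
        ((k : ℂ) + 1) * q ^ (k + j + 2)
          / ((1 - q ^ (k + 1)) * (1 - q ^ (k + j + 2)))
    = (∑' k : ℕ, ((k : ℂ) + 1) ^ 2 * q ^ (k + 1) / (1 - q ^ (k + 1)))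
      - ∑' k : ℕ, ((k : ℂ) + 1) * q ^ (k + 1) / (1 - q ^ (k + 1)) ^ 2 := by
  have hsq : ∑' k : ℕ, ((k : ℂ) + 1) ^ 2 * q ^ (k + 1) / (1 - q ^ (k + 1))
      = ∑' k : ℕ, ((k : ℂ) + 1) ^ 2 * LambertSeries.term q (k + 1) :=
    tsum_congr fun k => mul_div_assoc _ _ _
  calc _ = ∑' p, LambertSeries.pairTerm q p := (LambertSeries.summable_pairTerm hq).tsum_prod.symm
    _ = 2 * ∑' p, LambertSeries.tailTerm q p - ∑' k, LambertSeries.prodTerm q (k, k) :=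
        LambertSeries.tsum_pairTerm hq
    _ = _ := by
      rw [LambertSeries.two_mul_tsum_tailTerm hq,
        LambertSeries.tsum_natCast_add_one_mul_natCast_add_two_mul_term hq, hsq,
        LambertSeries.tsum_natCast_add_one_mul_div_one_sub_sq hq]
      ring
end

section
/- Define, for a complex number q and integer n ≥ 0, aa(n) := (−1)^{n−1} q^{\binom{n}{2}} ( Σ_{j=0}^{⌊n/2⌋} Σ_{i=−j+1}^{j} q^{j^2−i^2} + Σ_{j=0}^{⌊(n−1)/2⌋} Σ_{i=−j}^{j} q^{j^2+j−i^2−i} ) and aa1(n) := aa(n) + q^{n−1} aa(n−1) for n ≥ 1 (with aa1(0) := aa(0)). Then for all integers n ≥ 0: aa1(2n) = −q^{3n^2−n} Σ_{j=−n+1}^{n} q^{−j^2}, aa1(2n+1) = q^{3n^2+2n} Σ_{j=−n}^{n} q^{−j^2−j}, and moreover aa(n) = Σ_{j=0}^{n} (−1)^j q^{nj−\binom{j+1}{2}} aa1(n−j). -/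
/-- `aa(n) = (−1)^{n−1} q^{C(n,2)} ( Σ_{j=0}^{⌊n/2⌋} Σ_{i=−j+1}^{j} q^{j²−i²}
      + Σ_{j=0}^{⌊(n−1)/2⌋} Σ_{i=−j}^{j} q^{j²+j−i²−i} )`.
(For `n = 0` the second outer sum is empty; `(−1)^{n−1} = (−1)^{n+1}`.) -/
noncomputable def aa (q : ℂ) (n : ℕ) : ℂ :=
  (-1 : ℂ) ^ (n + 1) * q ^ n.choose 2 *
    ((∑ j ∈ Finset.range (n / 2 + 1), ∑ i ∈ Finset.Icc (1 - (j : ℤ)) (j : ℤ),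
        q ^ ((j : ℤ) ^ 2 - i ^ 2).toNat)
    + ∑ j ∈ Finset.range ((n + 1) / 2), ∑ i ∈ Finset.Icc (-(j : ℤ)) (j : ℤ),
        q ^ ((j : ℤ) ^ 2 + (j : ℤ) - i ^ 2 - i).toNat)

/-- `aa1(n) = aa(n) + q^{n−1} aa(n−1)` for `n ≥ 1`, with `aa1(0) = aa(0)`. -/
noncomputable def aa1 (q : ℂ) : ℕ → ℂ
  | 0 => aa q 0
  | (m + 1) => aa q (m + 1) + q ^ m * aa q m

noncomputable def Sq (q : ℂ) (n : ℕ) : ℂ :=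
  (∑ j ∈ Finset.range (n / 2 + 1), ∑ i ∈ Finset.Icc (1 - (j : ℤ)) (j : ℤ),
      q ^ ((j : ℤ) ^ 2 - i ^ 2).toNat)
  + ∑ j ∈ Finset.range ((n + 1) / 2), ∑ i ∈ Finset.Icc (-(j : ℤ)) (j : ℤ),
      q ^ ((j : ℤ) ^ 2 + (j : ℤ) - i ^ 2 - i).toNat

lemma aa_eq (q : ℂ) (n : ℕ) : aa q n = (-1) ^ (n + 1) * q ^ n.choose 2 * Sq q n := rfl

lemma aa1_succ (q : ℂ) (n : ℕ) :
    aa1 q (n + 1) = (-1) ^ n * q ^ ((n + 1).choose 2) * (Sq q (n + 1) - Sq q n) := by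
  have hch : (n + 1).choose 2 = n.choose 2 + n := by
    rw [Nat.choose_succ_succ]
    simp [Nat.choose_one_right, Nat.add_comm]
  simp only [aa1, aa_eq, hch]
  ring

lemma pow_toNat_mul (q : ℂ) (c : ℕ) (a b : ℤ) (ha : 0 ≤ a)
    (h : b = (c : ℤ) + a) : q ^ c * q ^ a.toNat = q ^ b.toNat := by
  rw [← pow_add]; congr 1; omega

lemma pow_toNat_mul' (q : ℂ) (c : ℕ) (a b : ℤ) (ha : 0 ≤ a)
    (h : b = a + (c : ℤ)) : q ^ a.toNat * q ^ c = q ^ b.toNat := by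
  rw [← pow_add]; congr 1; omega

lemma part_odd (q : ℂ) (n : ℕ) :
    aa1 q (2 * n + 1) = ∑ j ∈ Finset.Icc (-(n : ℤ)) (n : ℤ),
        q ^ (3 * (n : ℤ) ^ 2 + 2 * (n : ℤ) - j ^ 2 - j).toNat := by
  rw [aa1_succ, (even_two_mul n).neg_one_pow, one_mul]
  have h1 : Sq q (2 * n + 1) - Sq q (2 * n)
      = ∑ i ∈ Finset.Icc (-(n : ℤ)) (n : ℤ), q ^ ((n : ℤ) ^ 2 + (n : ℤ) - i ^ 2 - i).toNat := by
    unfold Sq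
    rw [show (2 * n + 1) / 2 + 1 = n + 1 by omega, show 2 * n / 2 + 1 = n + 1 by omega,
        show (2 * n + 1 + 1) / 2 = n + 1 by omega, show (2 * n + 1) / 2 = n by omega,
        Finset.sum_range_succ
          (fun j => ∑ i ∈ Finset.Icc (-(j : ℤ)) (j : ℤ),
            q ^ ((j : ℤ) ^ 2 + (j : ℤ) - i ^ 2 - i).toNat) n]
    ring
  rw [h1, Finset.mul_sum]
  refine Finset.sum_congr rfl fun i hi => ?_
  rw [Finset.mem_Icc] at hi
  have hi2 : i ^ 2 ≤ (n : ℤ) ^ 2 := sq_le_sq' hi.1 hi.2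
  have hch : (((2 * n + 1).choose 2 : ℕ) : ℤ) = 2 * (n : ℤ) ^ 2 + n := by
    rw [Nat.choose_two_right, Nat.add_sub_cancel,
        show (2 * n + 1) * (2 * n) = n * (2 * n + 1) * 2 by ring,
        Nat.mul_div_cancel _ two_pos]
    push_cast; ring
  exact pow_toNat_mul q _ _ _ (by linarith [hi.2]) (by rw [hch]; ring)

lemma part_even (q : ℂ) (n : ℕ) :
    aa1 q (2 * n) = -∑ j ∈ Finset.Icc (1 - (n : ℤ)) (n : ℤ),
        q ^ (3 * (n : ℤ) ^ 2 - (n : ℤ) - j ^ 2).toNat := by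
  cases n with
  | zero =>
      simp [aa1, aa, Finset.Icc_eq_empty (show ¬((1:ℤ) - 0 ≤ 0) by norm_num)]
  | succ m =>
      rw [show 2 * (m + 1) = (2 * m + 1) + 1 by ring, aa1_succ,
          (odd_two_mul_add_one m).neg_one_pow]
      have h1 : Sq q (2 * m + 1 + 1) - Sq q (2 * m + 1)
          = ∑ i ∈ Finset.Icc (1 - ((m + 1 : ℕ) : ℤ)) ((m + 1 : ℕ) : ℤ),
              q ^ (((m + 1 : ℕ) : ℤ) ^ 2 - i ^ 2).toNat := by
        unfold Sq
        rw [show (2 * m + 1 + 1) / 2 + 1 = (m + 1) + 1 by omega,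
            show (2 * m + 1) / 2 + 1 = m + 1 by omega,
            show (2 * m + 1 + 1 + 1) / 2 = m + 1 by omega,
            show (2 * m + 1 + 1) / 2 = m + 1 by omega,
            Finset.sum_range_succ
              (fun j => ∑ i ∈ Finset.Icc (1 - (j : ℤ)) (j : ℤ),
                q ^ ((j : ℤ) ^ 2 - i ^ 2).toNat) (m + 1)]
        ring
      rw [h1, neg_one_mul, neg_mul, Finset.mul_sum, neg_inj]
      refine Finset.sum_congr rfl fun i hi => ?_
      rw [Finset.mem_Icc] at hi
      have hi2 : i ^ 2 ≤ ((m + 1 : ℕ) : ℤ) ^ 2 := sq_le_sq' (by linarith [hi.1]) hi.2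
      have hch : (((2 * m + 1 + 1).choose 2 : ℕ) : ℤ)
          = 2 * ((m + 1 : ℕ) : ℤ) ^ 2 - ((m + 1 : ℕ) : ℤ) := by
        rw [Nat.choose_two_right, Nat.add_sub_cancel,
            show (2 * m + 1 + 1) * (2 * m + 1) = (m + 1) * (2 * m + 1) * 2 by ring,
            Nat.mul_div_cancel _ two_pos]
        push_cast; ring
      exact pow_toNat_mul q _ _ _ (by linarith) (by rw [hch]; ring)

noncomputable def Tt (q : ℂ) (n j : ℕ) : ℂ :=
  (-1 : ℂ) ^ j * q ^ ((n : ℤ) * (j : ℤ) - (j : ℤ) * ((j : ℤ) + 1) / 2).toNat * aa q (n - j)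

lemma E_nonneg (n j : ℕ) (hj : j ≤ n) :
    0 ≤ (n : ℤ) * (j : ℤ) - (j : ℤ) * ((j : ℤ) + 1) / 2 := by
  have h2 : (2 : ℤ) ∣ (j : ℤ) * ((j : ℤ) + 1) := (Int.even_mul_succ_self _).two_dvd
  have hh : (j : ℤ) * ((j : ℤ) + 1) / 2 * 2 = (j : ℤ) * ((j : ℤ) + 1) :=
    Int.ediv_mul_cancel h2
  have hj' : (j : ℤ) ≤ n := by exact_mod_cast hj
  have hj0 : (0 : ℤ) ≤ j := Int.natCast_nonneg j
  rcases Nat.eq_zero_or_pos j with rfl | hj1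
  · simp
  · have hn1 : (1 : ℤ) ≤ n := by exact_mod_cast le_trans hj1 hj
    nlinarith [mul_nonneg hj0 (sub_nonneg.mpr hj'), mul_nonneg hj0 (sub_nonneg.mpr hn1)]

lemma E_step' (n j : ℤ) :
    n * (j + 1) - (j + 1) * ((j + 1) + 1) / 2
      = (n * j - j * (j + 1) / 2) + (n - j - 1) := by
  have key : (j + 1) * ((j + 1) + 1) / 2 = j * (j + 1) / 2 + (j + 1) := by
    rw [show (j + 1) * ((j + 1) + 1) = j * (j + 1) + (j + 1) * 2 by ring,
        Int.add_mul_ediv_right _ _ (by norm_num : (2:ℤ) ≠ 0)]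
  rw [key]; ring

lemma step (q : ℂ) (n j : ℕ) (hj : j < n) :
    (-1 : ℂ) ^ j * q ^ ((n : ℤ) * (j : ℤ) - (j : ℤ) * ((j : ℤ) + 1) / 2).toNat * aa1 q (n - j)
      = Tt q n j - Tt q n (j + 1) := by
  have hc : ((n - j - 1 : ℕ) : ℤ) = (n : ℤ) - j - 1 := by omega
  have hE : (n : ℤ) * ((j + 1 : ℕ) : ℤ)
        - ((j + 1 : ℕ) : ℤ) * (((j + 1 : ℕ) : ℤ) + 1) / 2
      = ((n : ℤ) * j - (j : ℤ) * ((j : ℤ) + 1) / 2) + ((n - j - 1 : ℕ) : ℤ) := by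
    rw [hc]; push_cast; exact E_step' n j
  have hpow : q ^ ((n : ℤ) * (j : ℤ) - (j : ℤ) * ((j : ℤ) + 1) / 2).toNat * q ^ (n - j - 1)
      = q ^ ((n : ℤ) * ((j + 1 : ℕ) : ℤ)
          - ((j + 1 : ℕ) : ℤ) * (((j + 1 : ℕ) : ℤ) + 1) / 2).toNat :=
    pow_toNat_mul' q _ _ _ (E_nonneg n j hj.le) hE
  rw [show n - j = (n - j - 1) + 1 by omega]
  simp only [aa1, Tt]
  rw [show n - j - 1 + 1 = n - j by omega, show n - (j + 1) = n - j - 1 by omega]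
  linear_combination ((-1 : ℂ) ^ j * aa q (n - j - 1)) * hpow

lemma part3 (q : ℂ) (n : ℕ) :
    aa q n = ∑ j ∈ Finset.range (n + 1),
        (-1 : ℂ) ^ j * q ^ ((n : ℤ) * (j : ℤ) - (j : ℤ) * ((j : ℤ) + 1) / 2).toNat
          * aa1 q (n - j) := by
  rw [Finset.sum_range_succ,
      Finset.sum_congr rfl fun j hj => step q n j (Finset.mem_range.mp hj),
      Finset.sum_range_sub' (Tt q n)]
  have hT0 : Tt q n 0 = aa q n := by simp [Tt]
  have hlast : (-1 : ℂ) ^ n * q ^ ((n : ℤ) * (n : ℤ) - (n : ℤ) * ((n : ℤ) + 1) / 2).toNat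
      * aa1 q (n - n) = Tt q n n := by
    rw [Nat.sub_self]
    simp only [Tt, Nat.sub_self, aa1]
  rw [hlast, hT0]; ring

/-- For all `n ≥ 0`:
`aa1(2n) = −q^{3n²−n} Σ_{j=−n+1}^{n} q^{−j²}`,
`aa1(2n+1) = q^{3n²+2n} Σ_{j=−n}^{n} q^{−j²−j}`, and
`aa(n) = Σ_{j=0}^{n} (−1)^j q^{nj−C(j+1,2)} aa1(n−j)`.
All combined exponents are nonnegative integers (rendered via `Int.toNat`). -/
theorem aa1_eval_and_aa_recovery (q : ℂ) (n : ℕ) :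
    (aa1 q (2 * n)
        = -∑ j ∈ Finset.Icc (1 - (n : ℤ)) (n : ℤ),
            q ^ (3 * (n : ℤ) ^ 2 - (n : ℤ) - j ^ 2).toNat)
    ∧ (aa1 q (2 * n + 1)
        = ∑ j ∈ Finset.Icc (-(n : ℤ)) (n : ℤ),
            q ^ (3 * (n : ℤ) ^ 2 + 2 * (n : ℤ) - j ^ 2 - j).toNat)
    ∧ (aa q n
        = ∑ j ∈ Finset.range (n + 1),
            (-1 : ℂ) ^ j * q ^ ((n : ℤ) * (j : ℤ) - (j : ℤ) * ((j : ℤ) + 1) / 2).toNat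
              * aa1 q (n - j)) :=
  ⟨part_even q n, part_odd q n, part3 q n⟩
end

section
/- For all positive integers m and n, every coefficient of the power series expansion in q of a(m,n) := (−1)^{m−1} q^{2mn+m−1} / ((1+q^n)(1−q^{2m−1})) is equal to −1, 0, or 1. -/
/-!
Expanding both geometric series, the `K`-th coefficient of `(1 + q^n)⁻¹ (1 - q^d)⁻¹` is the sum
of `(-1)^(a/n)` over the `a ≤ K` with `n ∣ a` and `a ≡ K (mod d)`. For odd `d` these summands are
antiperiodic in `a` with period `L = lcm n d`, since `L / n` divides `d`; by the Chinese remainder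
theorem at most one of them is nonzero in `[0, L)`. So the partial sums `s` satisfy
`s (L + M) = s L - s M` and only take the values `0` and `s L ∈ {0, ±1}`. The prefactor
`(-1)^(m-1) q^(2mn+m-1)` only shifts the coefficients and changes their sign.
-/

open PowerSeries Finset

theorem Function.Antiperiodic.sum_range_add {G : Type*} [AddCommGroup G] {g : ℕ → G} {L : ℕ}
    (hg : Function.Antiperiodic g L) (M : ℕ) :
    ∑ i ∈ range (L + M), g i = ∑ i ∈ range L, g i - ∑ i ∈ range M, g i := by
  rw [Finset.sum_range_add, sub_eq_add_neg, ← sum_neg_distrib]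
  exact congrArg _ (sum_congr rfl fun i _ => by rw [add_comm, hg])

theorem Function.Antiperiodic.sum_range_mem_insert_zero_range {G : Type*} [AddCommGroup G]
    {g : ℕ → G} {L : ℕ} (hg : Function.Antiperiodic g L) (hL : 0 < L)
    (hsupp : ∀ a < L, ∀ b < L, g a ≠ 0 → g b ≠ 0 → a = b) (M : ℕ) :
    ∑ i ∈ range M, g i ∈ insert 0 (Set.range g) := by
  obtain ⟨a₀, ha₀L, ha₀⟩ : ∃ a₀ < L, ∀ i < L, i ≠ a₀ → g i = 0 := by
    by_cases h : ∃ a < L, g a ≠ 0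
    · obtain ⟨a, ha, hga⟩ := h
      exact ⟨a, ha, fun i hi hia => by_contra fun hgi => hia (hsupp i hi a ha hgi hga)⟩
    · push Not at h
      exact ⟨0, hL, fun i hi _ => h i hi⟩
  have hshort : ∀ M ≤ L, ∑ i ∈ range M, g i = if a₀ < M then g a₀ else 0 := by
    intro M hM
    calc ∑ i ∈ range M, g i = ∑ i ∈ range M, if a₀ = i then g i else 0 :=
          sum_congr rfl fun i hi => by
            split_ifs with h
            · rfl
            · exact ha₀ i (by grind) (Ne.symm h)
      _ = _ := by simp only [sum_ite_eq, mem_range]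
  have hvalues : ∀ M, ∑ i ∈ range M, g i = 0 ∨ ∑ i ∈ range M, g i = g a₀ := by
    intro M
    induction M using Nat.strong_induction_on with
    | _ M ih =>
      rcases le_or_gt M L with hM | hM
      · rw [hshort M hM]; split_ifs <;> simp
      · obtain ⟨M', rfl⟩ := Nat.exists_eq_add_of_lt hM
        rw [add_assoc, hg.sum_range_add, hshort L le_rfl, if_pos ha₀L]
        rcases ih (M' + 1) (by omega) with h | h <;> simp [h]
  rcases hvalues M with h | h
  · exact h ▸ Set.mem_insert _ _
  · exact h ▸ Set.mem_insert_of_mem _ ⟨a₀, rfl⟩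

theorem Nat.ModEq.eq_of_lt_lcm {a b m n : ℕ} (hm : a ≡ b [MOD m]) (hn : a ≡ b [MOD n])
    (ha : a < Nat.lcm m n) (hb : b < Nat.lcm m n) : a = b := by
  have h : (a : ℤ) ≡ b [ZMOD Int.lcm m n] :=
    Int.modEq_and_modEq_iff_modEq_lcm.mp
      ⟨Int.natCast_modEq_iff.mpr hm, Int.natCast_modEq_iff.mpr hn⟩
  exact (Int.natCast_modEq_iff.mp h).eq_of_lt_of_lt ha hb

theorem neg_one_pow_mul_mem {R : Type*} [Ring R] {x : R} (hx : x ∈ ({-1, 0, 1} : Set R))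
    (k : ℕ) : (-1) ^ k * x ∈ ({-1, 0, 1} : Set R) := by
  rcases neg_one_pow_eq_or R k with h | h <;> rcases hx with rfl | rfl | rfl <;> simp [h]

theorem PowerSeries.coeff_inv_one_sub_C_mul_X_pow {k : Type*} [Field k] (c : k) {n : ℕ}
    (hn : n ≠ 0) (K : ℕ) :
    coeff K (1 - C c * X ^ n : k⟦X⟧)⁻¹ = if n ∣ K then c ^ (K / n) else 0 := by
  have hinv : (1 - C c * X ^ n : k⟦X⟧)⁻¹ = expand n hn (rescale c (mk 1)) := by
    rw [PowerSeries.inv_eq_iff_mul_eq_one (by simp [hn])]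
    have : (1 - C c * X ^ n : k⟦X⟧) = expand n hn (rescale c (1 - X)) := by
      simp [rescale_X, expand_X, expand_C]
    rw [this, ← map_mul, ← map_mul, mk_one_mul_one_sub_eq_one, map_one, map_one]
  rw [hinv, coeff_expand]
  simp [coeff_rescale]

section CoeffSummand

variable (R : Type*) [Ring R]

-- `a ≡ K [MOD d]` replaces `d ∣ K - a`, which truncated subtraction would spoil for `a > K`;
-- this makes the summand antiperiodic in `a`.
def coeffSummand (n d K a : ℕ) : R :=
  if n ∣ a ∧ a ≡ K [MOD d] then (-1) ^ (a / n) else 0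

variable {R}

theorem coeffSummand_mem (n d K a : ℕ) : coeffSummand R n d K a ∈ ({-1, 0, 1} : Set R) := by
  unfold coeffSummand
  split_ifs
  · rcases neg_one_pow_eq_or R (a / n) with h | h <;> simp [h]
  · simp

theorem coeffSummand_antiperiodic {n d : ℕ} (hn : 0 < n) (hd : Odd d) (K : ℕ) :
    Function.Antiperiodic (coeffSummand R n d K) (Nat.lcm n d) := by
  intro a
  have hnL : n ∣ Nat.lcm n d := Nat.dvd_lcm_left n d
  have hodd : Odd (Nat.lcm n d / n) :=
    hd.of_dvd_nat ((Nat.div_dvd_iff_dvd_mul hnL hn).mpr (Nat.lcm_dvd_mul n d))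
  have hmod : a + Nat.lcm n d ≡ a [MOD d] := by
    simpa using (Nat.modEq_zero_iff_dvd.mpr (Nat.dvd_lcm_right n d)).add_left a
  have hcong : a + Nat.lcm n d ≡ K [MOD d] ↔ a ≡ K [MOD d] := ⟨hmod.symm.trans, hmod.trans⟩
  simp only [coeffSummand, Nat.dvd_add_left hnL, hcong]
  split_ifs with h
  · rw [Nat.add_div_of_dvd_right h.1, pow_add, hodd.neg_one_pow, mul_neg_one]
  · rw [neg_zero]

theorem coeffSummand_eq_of_ne_zero {n d K a b : ℕ} (ha : a < Nat.lcm n d) (hb : b < Nat.lcm n d)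
    (hga : coeffSummand R n d K a ≠ 0) (hgb : coeffSummand R n d K b ≠ 0) : a = b := by
  obtain ⟨⟨hna, hda⟩, -⟩ := ite_ne_right_iff.mp hga
  obtain ⟨⟨hnb, hdb⟩, -⟩ := ite_ne_right_iff.mp hgb
  have hmodn : a ≡ b [MOD n] :=
    (Nat.modEq_zero_iff_dvd.mpr hna).trans (Nat.modEq_zero_iff_dvd.mpr hnb).symm
  exact hmodn.eq_of_lt_lcm (hda.trans hdb.symm) ha hb

end CoeffSummand

theorem coeff_inv_one_add_X_pow_mul_inv_one_sub_X_pow_eq_sum {k : Type*} [Field k] {n d : ℕ}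
    (hn : n ≠ 0) (hd : d ≠ 0) (K : ℕ) :
    coeff K ((1 + X ^ n)⁻¹ * (1 - X ^ d)⁻¹ : k⟦X⟧) =
      ∑ a ∈ range (K + 1), coeffSummand k n d K a := by
  have hplus : (1 + X ^ n : k⟦X⟧) = 1 - C (-1) * X ^ n := by simp
  have hminus : (1 - X ^ d : k⟦X⟧) = 1 - C 1 * X ^ d := by simp
  rw [hplus, hminus, coeff_mul, Nat.sum_antidiagonal_eq_sum_range_succ_mk]
  refine sum_congr rfl fun a ha => ?_
  have hdvd : d ∣ K - a ↔ a ≡ K [MOD d] := (Nat.modEq_iff_dvd' (by grind)).symm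
  simp only [coeff_inv_one_sub_C_mul_X_pow _ hn, coeff_inv_one_sub_C_mul_X_pow _ hd, one_pow,
    hdvd, coeffSummand, ite_zero_mul_ite_zero, mul_one]

theorem coeff_inv_one_add_X_pow_mul_inv_one_sub_X_pow_mem {k : Type*} [Field k] {n d : ℕ}
    (hn : 0 < n) (hd : Odd d) (K : ℕ) :
    coeff K ((1 + X ^ n)⁻¹ * (1 - X ^ d)⁻¹ : k⟦X⟧) ∈ ({-1, 0, 1} : Set k) := by
  rw [coeff_inv_one_add_X_pow_mul_inv_one_sub_X_pow_eq_sum hn.ne' hd.pos.ne']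
  rcases (coeffSummand_antiperiodic (R := k) hn hd K).sum_range_mem_insert_zero_range
      (Nat.lcm_pos hn hd.pos) (fun a ha b hb => coeffSummand_eq_of_ne_zero ha hb) (K + 1)
    with h | ⟨a, h⟩
  · simp [h]
  · exact h ▸ coeffSummand_mem n d K a

/-- For all positive integers `m` and `n`, every coefficient of the formal power
series expansion in `q` of `a(m,n) = (−1)^{m−1} q^{2mn+m−1} / ((1+q^n)(1−q^{2m−1}))`
is `−1`, `0`, or `1`. -/
theorem coeffs_pm_one (m n : ℕ) (hm : 1 ≤ m) (hn : 1 ≤ n) (N : ℕ) :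
    PowerSeries.coeff (R := ℂ) N
      ((-1 : PowerSeries ℂ) ^ (m - 1) * (PowerSeries.X : PowerSeries ℂ) ^ (2 * m * n + m - 1)
        * (1 + (PowerSeries.X : PowerSeries ℂ) ^ n)⁻¹
        * (1 - (PowerSeries.X : PowerSeries ℂ) ^ (2 * m - 1))⁻¹)
      ∈ ({-1, 0, 1} : Set ℂ) := by
  set d := 2 * m - 1
  have hd : Odd d := ⟨m - 1, by omega⟩
  have hsplit : (-1 : ℂ⟦X⟧) ^ (m - 1) * X ^ (2 * m * n + m - 1) * (1 + X ^ n)⁻¹ * (1 - X ^ d)⁻¹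
      = C ((-1) ^ (m - 1)) * (X ^ (2 * m * n + m - 1) * ((1 + X ^ n)⁻¹ * (1 - X ^ d)⁻¹)) := by
    simp only [map_pow, map_neg, map_one]
    ring
  rw [hsplit, coeff_C_mul, coeff_X_pow_mul']
  split_ifs
  · exact neg_one_pow_mul_mem (coeff_inv_one_add_X_pow_mul_inv_one_sub_X_pow_mem hn hd _) _
  · simp
end

section
/- For every complex number q with |q| < 1, Σ_{m≥1} Σ_{n≥1} (−1)^{m−1} q^{2mn+m−1} / ((1+q^n)(1−q^{2m−1})) = Σ_{k≥2} ( q^{k−1}/(1+q^{2k−1}) ) Σ_{n=1}^{k−1} q^n/(1+q^n). -/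
/-!
Expanding `1 / (1 - q^(2m+1))` as a geometric series in `q^(2m+1)` turns the left side into an
absolutely convergent triple sum over `m, n, j`. Summing the alternating geometric series in `m`
first leaves `q^(n+j+1) / (1 + q^(2(n+j)+3)) · q^(n+1) / (1 + q^(n+1))`, and grouping the pairs
`(n, j)` along the antidiagonals `n + j = k` gives the right side.
-/

open Finset Function

theorem Summable.tsum_eq_tsum_sum_antidiagonal {A α : Type*} [AddCommMonoid A] [HasAntidiagonal A]
    [AddCommMonoid α] [TopologicalSpace α] [ContinuousAdd α] [T3Space α] {f : A × A → α}
    (hf : Summable f) : ∑' p, f p = ∑' n, ∑ p ∈ antidiagonal n, f p := by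
  rw [← HasAntidiagonal.sigmaAntidiagonalEquivProd.tsum_eq f]
  refine ((HasAntidiagonal.sigmaAntidiagonalEquivProd.summable_iff.mpr hf).tsum_sigma'
    fun n ↦ (hasSum_fintype _).summable).trans (tsum_congr fun n ↦ ?_)
  rw [tsum_fintype]
  exact sum_coe_sort (antidiagonal n) f

theorem summable_uncurry_of_norm_le_mul_pow_add {E : Type*} [NormedAddCommGroup E]
    [CompleteSpace E] {f : ℕ → ℕ → E} {C r : ℝ} (hr₀ : 0 ≤ r) (hr₁ : r < 1)
    (hf : ∀ m n, ‖f m n‖ ≤ C * r ^ (m + n)) : Summable (uncurry f) := by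
  have hgeom := summable_geometric_of_lt_one hr₀ hr₁
  refine Summable.of_norm_bounded ((hgeom.mul_of_nonneg hgeom (fun n ↦ pow_nonneg hr₀ n)
    fun n ↦ pow_nonneg hr₀ n).mul_left C) fun ⟨m, n⟩ ↦ ?_
  simpa only [uncurry_apply_pair, pow_add] using hf m n

theorem Finset.Nat.sum_antidiagonal_mul_eq_mul_sum_Icc {R : Type*} [CommSemiring R]
    (g f : ℕ → R) (k : ℕ) :
    ∑ p ∈ antidiagonal k, g (p.1 + p.2) * f (p.1 + 1) = g k * ∑ n ∈ Icc 1 (k + 1), f n := by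
  rw [sum_congr rfl fun p hp ↦ by rw [mem_antidiagonal.mp hp], ← mul_sum,
    Nat.sum_antidiagonal_eq_sum_range_succ_mk (fun p ↦ f (p.1 + 1)), range_eq_Ico,
    sum_Ico_add' f]
  rfl

section

variable {𝕜 : Type*} [NormedField 𝕜] {q : 𝕜}

theorem one_sub_le_norm_one_add {x : 𝕜} {r : ℝ} (hx : ‖x‖ ≤ r) : 1 - r ≤ ‖1 + x‖ := by
  have := norm_sub_le (1 + x) x
  rw [add_sub_cancel_right, norm_one] at this
  linarith

theorem norm_inv_one_add_le {x : 𝕜} {r : ℝ} (hx : ‖x‖ ≤ r) (hr : r < 1) :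
    ‖(1 + x)⁻¹‖ ≤ (1 - r)⁻¹ := by
  rw [norm_inv]
  exact inv_anti₀ (by linarith) (one_sub_le_norm_one_add hx)

theorem norm_pow_le_norm (hq : ‖q‖ ≤ 1) {e : ℕ} (he : e ≠ 0) : ‖q ^ e‖ ≤ ‖q‖ := by
  rw [norm_pow]
  exact pow_le_of_le_one (norm_nonneg q) hq he

theorem hasSum_neg_one_pow_mul_pow {x : 𝕜} (hx : ‖x‖ < 1) :
    HasSum (fun m : ℕ ↦ (-1) ^ m * x ^ m) (1 + x)⁻¹ := by
  have := hasSum_geometric_of_norm_lt_one (show ‖-x‖ < 1 by rwa [norm_neg])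
  rw [sub_neg_eq_add] at this
  exact this.congr_fun fun m ↦ (neg_pow x m).symm

theorem norm_inv_one_add_pow_le (hq : ‖q‖ < 1) {e : ℕ} (he : e ≠ 0) :
    ‖(1 + q ^ e)⁻¹‖ ≤ (1 - ‖q‖)⁻¹ :=
  norm_inv_one_add_le (norm_pow_le_norm hq.le he) hq

theorem norm_inv_one_sub_pow_le (hq : ‖q‖ < 1) {e : ℕ} (he : e ≠ 0) :
    ‖(1 - q ^ e)⁻¹‖ ≤ (1 - ‖q‖)⁻¹ := by
  rw [sub_eq_add_neg]
  exact norm_inv_one_add_le (by rw [norm_neg]; exact norm_pow_le_norm hq.le he) hq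

theorem norm_pow_mul_le (hq : ‖q‖ ≤ 1) {a e : ℕ} (hae : a ≤ e) {u : 𝕜} {C : ℝ} (hu : ‖u‖ ≤ C) :
    ‖q ^ e * u‖ ≤ C * ‖q‖ ^ a := by
  rw [norm_mul, norm_pow, mul_comm]
  exact mul_le_mul hu (pow_le_pow_of_le_one (norm_nonneg q) hq hae) (by positivity)
    ((norm_nonneg u).trans hu)

variable [CompleteSpace 𝕜]

theorem summable_lambert_terms (hq : ‖q‖ < 1) :
    Summable (uncurry fun m n : ℕ ↦ (-1 : 𝕜) ^ m * q ^ (2 * (m + 1) * (n + 1) + m)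
      / ((1 + q ^ (n + 1)) * (1 - q ^ (2 * m + 1)))) := by
  refine summable_uncurry_of_norm_le_mul_pow_add (C := (1 - ‖q‖)⁻¹ * (1 - ‖q‖)⁻¹)
    (norm_nonneg q) hq fun m n ↦ ?_
  rw [div_eq_mul_inv, mul_assoc, norm_mul, norm_pow, norm_neg, norm_one, one_pow, one_mul, mul_inv]
  exact norm_pow_mul_le hq.le (by nlinarith) (norm_mul_le_of_le
    (norm_inv_one_add_pow_le hq n.succ_ne_zero) (norm_inv_one_sub_pow_le hq (2 * m).succ_ne_zero))

theorem summable_diagonal_terms (hq : ‖q‖ < 1) :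
    Summable (uncurry fun n j : ℕ ↦
      q ^ (n + j + 1) / (1 + q ^ (2 * (n + j) + 3)) * (q ^ (n + 1) / (1 + q ^ (n + 1)))) := by
  refine summable_uncurry_of_norm_le_mul_pow_add (C := (1 - ‖q‖)⁻¹ * (1 - ‖q‖)⁻¹)
    (norm_nonneg q) hq fun n j ↦ ?_
  have hE : n + j ≤ n + j + 1 + (n + 1) := by omega
  rw [show q ^ (n + j + 1) / (1 + q ^ (2 * (n + j) + 3)) * (q ^ (n + 1) / (1 + q ^ (n + 1)))
      = q ^ (n + j + 1 + (n + 1)) * ((1 + q ^ (2 * (n + j) + 3))⁻¹ * (1 + q ^ (n + 1))⁻¹) by ring]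
  exact norm_pow_mul_le hq.le hE (norm_mul_le_of_le
    (norm_inv_one_add_pow_le hq (by omega)) (norm_inv_one_add_pow_le hq n.succ_ne_zero))

theorem tsum_lambert_eq_tsum_diagonal (hq : ‖q‖ < 1) (n : ℕ) :
    ∑' m : ℕ, (-1 : 𝕜) ^ m * q ^ (2 * (m + 1) * (n + 1) + m)
      / ((1 + q ^ (n + 1)) * (1 - q ^ (2 * m + 1)))
    = ∑' j : ℕ,
        q ^ (n + j + 1) / (1 + q ^ (2 * (n + j) + 3)) * (q ^ (n + 1) / (1 + q ^ (n + 1))) := by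
  set c : ℕ → 𝕜 := fun j ↦ q ^ (n + j + 1) * (q ^ (n + 1) / (1 + q ^ (n + 1)))
  set F : ℕ → ℕ → 𝕜 := fun m j ↦ (-1) ^ m * (q ^ (2 * (n + j) + 3)) ^ m * c j with hF
  have hsum : Summable (uncurry F) := by
    refine summable_uncurry_of_norm_le_mul_pow_add (C := (1 - ‖q‖)⁻¹) (norm_nonneg q) hq
      fun m j ↦ ?_
    have hE : m + j ≤ (2 * (n + j) + 3) * m + (n + j + 1) + (n + 1) := by nlinarith
    rw [show F m j = (-1) ^ m * (q ^ ((2 * (n + j) + 3) * m + (n + j + 1) + (n + 1))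
        * (1 + q ^ (n + 1))⁻¹) by simp only [hF, c]; ring,
      norm_mul, norm_pow, norm_neg, norm_one, one_pow, one_mul]
    exact norm_pow_mul_le hq.le hE (norm_inv_one_add_pow_le hq n.succ_ne_zero)
  have hrow (m : ℕ) : (-1 : 𝕜) ^ m * q ^ (2 * (m + 1) * (n + 1) + m)
      / ((1 + q ^ (n + 1)) * (1 - q ^ (2 * m + 1))) = ∑' j, F m j := by
    rw [div_mul_eq_div_div, div_eq_mul_inv _ (1 - _), ← tsum_geometric_of_norm_lt_one
      ((norm_pow_le_norm (e := 2 * m + 1) hq.le (by omega)).trans_lt hq), ← tsum_mul_left]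
    exact tsum_congr fun j ↦ by simp only [hF, c]; ring
  have hcol (j : ℕ) : ∑' m, F m j
      = q ^ (n + j + 1) / (1 + q ^ (2 * (n + j) + 3)) * (q ^ (n + 1) / (1 + q ^ (n + 1))) := by
    rw [((hasSum_neg_one_pow_mul_pow ((norm_pow_le_norm hq.le (by omega)).trans_lt hq)).mul_right
      (c j)).tsum_eq]
    simp only [c]
    ring
  rw [tsum_congr hrow, ← hsum.tsum_comm' hsum.prod_factor hsum.prod_symm.prod_factor]
  exact tsum_congr hcol

end

/-- `Σ_{m,n≥1} (−1)^{m−1} q^{2mn+m−1} / ((1+q^n)(1−q^{2m−1}))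
      = Σ_{k≥2} ( q^{k−1}/(1+q^{2k−1}) ) Σ_{n=1}^{k−1} q^n/(1+q^n)`. -/
theorem ytilde_double_lambert (q : ℂ) (hq : ‖q‖ < 1) :
    ∑' m : ℕ, ∑' n : ℕ,
        (-1 : ℂ) ^ m * q ^ (2 * (m + 1) * (n + 1) + (m + 1) - 1)
          / ((1 + q ^ (n + 1)) * (1 - q ^ (2 * (m + 1) - 1)))
    = ∑' k : ℕ,
        q ^ ((k + 2) - 1) / (1 + q ^ (2 * (k + 2) - 1))
          * ∑ n ∈ Finset.Icc 1 (k + 1), q ^ n / (1 + q ^ n) := by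
  have hm (m n : ℕ) : 2 * (m + 1) * (n + 1) + (m + 1) - 1 = 2 * (m + 1) * (n + 1) + m := by omega
  have hm' (m : ℕ) : 2 * (m + 1) - 1 = 2 * m + 1 := by omega
  have hk (k : ℕ) : k + 2 - 1 = k + 1 := by omega
  simp only [hm, hm', hk]
  have hT := summable_lambert_terms hq
  have hD := summable_diagonal_terms hq
  calc _ = ∑' n : ℕ, ∑' m : ℕ, (-1 : ℂ) ^ m * q ^ (2 * (m + 1) * (n + 1) + m)
          / ((1 + q ^ (n + 1)) * (1 - q ^ (2 * m + 1))) :=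
        (hT.tsum_comm' hT.prod_factor hT.prod_symm.prod_factor).symm
    _ = ∑' n : ℕ, ∑' j : ℕ,
          q ^ (n + j + 1) / (1 + q ^ (2 * (n + j) + 3)) * (q ^ (n + 1) / (1 + q ^ (n + 1))) :=
        tsum_congr (tsum_lambert_eq_tsum_diagonal hq)
    _ = ∑' k : ℕ, ∑ p ∈ antidiagonal k,
          q ^ (p.1 + p.2 + 1) / (1 + q ^ (2 * (p.1 + p.2) + 3))
            * (q ^ (p.1 + 1) / (1 + q ^ (p.1 + 1))) :=
        (hD.tsum_prod' hD.prod_factor).symm.trans hD.tsum_eq_tsum_sum_antidiagonal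
    _ = _ := tsum_congr fun k ↦ Nat.sum_antidiagonal_mul_eq_mul_sum_Icc
          (fun k ↦ q ^ (k + 1) / (1 + q ^ (2 * k + 3))) (fun n ↦ q ^ n / (1 + q ^ n)) k
end

section
/- Let q = e^{−1}. Then ∏_{j≥1} 1/(1+q^j) · ( Σ_{k≥1} (q^k/(1+q^k)) Σ_{ℓ>k} q^{ℓ−1}/(1+q^{2ℓ−1}) ) = Σ_{λ ∈ P} (−1)^{λ_1} Σ_{ℓ≥1} q^{|λ|−ℓ} (λ_{2ℓ−1} − λ_{2ℓ})(λ_1 − λ_ℓ), where the outer sum on the right runs over all partitions λ of all nonnegative integers. -/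
/-!
Encode a partition `λ` by `e t = λ_{t+1} - λ_{t+2}`, the multiplicity of `t + 1` as a part of the
conjugate partition. Then `(-1)^{λ_1} q^{|λ|} = ∏_t r_t ^ {e t}` with `r_t = -q^{t+1}`,
`λ_{2ℓ-1} - λ_{2ℓ} = e (2ℓ - 2)` and `λ_1 - λ_ℓ = ∑_{t < ℓ-1} e t`, so the right-hand side becomes a
sum of "moments" `∑_e e_a e_b ∏_t r_t ^ {e t}`. Splitting off the coordinates `a` and `b`, these
factor as `r_a/(1-r_a) · r_b/(1-r_b) · ∏_k (1 - r_k)⁻¹`, where the last factor is the Euler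
product `∏_j (1 + q^j)⁻¹`, and `-r_k/(1-r_k) = q^{k+1}/(1+q^{k+1})`. Everything converges
absolutely, so the sums may be exchanged, and reindexing `ℓ > k` gives the left-hand side.
-/

/-- The `k`-th part (1-indexed) of a partition `p` of `n`, where the parts are
listed in non-increasing order, with `partOf p k = 0` when `k` exceeds the
number of parts (or `k = 0`). -/
noncomputable def partOf {n : ℕ} (p : Nat.Partition n) (k : ℕ) : ℕ :=
  (p.parts.sort (· ≥ ·)).getD (k - 1) 0

open Finset Filter Topology

namespace Finsupp

variable {ι M : Type*} [Zero M]

noncomputable def eraseEquiv (a : ι) : (ι →₀ M) ≃ {f : ι →₀ M | f a = 0} × M where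
  toFun e := (⟨e.erase a, erase_same⟩, e a)
  invFun p := p.1.1.update a p.2
  left_inv e := by simp
  right_inv := fun ⟨⟨f, hf⟩, m⟩ => by
    classical
    simp [erase_of_notMem_support (notMem_support_iff.mpr hf), update_apply]

lemma hasSum_mul_erase (a : ι) {φ : M → ℝ} {G : (ι →₀ M) → ℝ} (hφ : Summable (‖φ ·‖))
    (hG : Summable fun f : {f : ι →₀ M | f a = 0} => ‖G f‖) :
    HasSum (fun e : ι →₀ M => φ (e a) * G (e.erase a))
      ((∑' m, φ m) * ∑' f : {f : ι →₀ M | f a = 0}, G f) := by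
  have h := hφ.of_norm.hasSum.mul hG.of_norm.hasSum (summable_mul_of_summable_norm hφ hG)
  rw [← (Equiv.prodComm _ _).hasSum_iff] at h
  rw [← (eraseEquiv a).symm.hasSum_iff]
  refine h.congr_fun fun ⟨⟨f, hf⟩, m⟩ => ?_
  classical
  simp [eraseEquiv, update_apply, erase_of_notMem_support (notMem_support_iff.mpr hf)]

end Finsupp

section MultiPow

variable {ι : Type*}

noncomputable def multiPow (r : ι → ℝ) (e : ι →₀ ℕ) : ℝ := e.prod fun k m => r k ^ m

lemma multiPow_eq_pow_mul_erase (r : ι → ℝ) (e : ι →₀ ℕ) (a : ι) :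
    multiPow r e = r a ^ e a * multiPow r (e.erase a) :=
  (Finsupp.mul_prod_erase' e a _ fun _ => pow_zero _).symm

lemma abs_multiPow (r : ι → ℝ) (e : ι →₀ ℕ) : |multiPow r e| = multiPow (|r ·|) e := by
  simp only [multiPow, Finsupp.prod, Finset.abs_prod, abs_pow]

lemma multiPow_nonneg {r : ι → ℝ} (hr : ∀ k, 0 ≤ r k) (e : ι →₀ ℕ) : 0 ≤ multiPow r e :=
  Finset.prod_nonneg fun k _ => pow_nonneg (hr k) _

lemma hasSum_indicator_multiPow (s : Finset ι) {r : ι → ℝ} (hr : ∀ k, |r k| < 1) :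
    HasSum ({e : ι →₀ ℕ | e.support ⊆ s}.indicator (multiPow r)) (∏ k ∈ s, (1 - r k)⁻¹) := by
  classical
  induction s using Finset.induction_on generalizing r with
  | empty =>
    convert hasSum_ite_eq (0 : ι →₀ ℕ) (1 : ℝ) using 2 with e
    · by_cases he : e = 0 <;> simp [he, multiPow]
    · simp
  | insert a s ha ih =>
    have hsplit (e : ι →₀ ℕ) : {e : ι →₀ ℕ | e.support ⊆ insert a s}.indicator (multiPow r) e =
        r a ^ e a * {e : ι →₀ ℕ | e.support ⊆ s}.indicator (multiPow r) (e.erase a) := by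
      simp only [Set.indicator_apply, Set.mem_ofPred_eq, Finsupp.support_erase,
        ← Finset.subset_insert_iff, ← multiPow_eq_pow_mul_erase, mul_ite, mul_zero]
    have hsupp (r : ι → ℝ) : Function.support
        ({e : ι →₀ ℕ | e.support ⊆ s}.indicator (multiPow r)) ⊆ {f | f a = 0} := by
      intro e he
      by_contra hea
      exact Function.mem_support.mp he <| Set.indicator_of_notMem
        (fun h : e.support ⊆ s => ha (h (Finsupp.mem_support_iff.mpr hea))) _
    have habs := ((hasSum_subtype_iff_of_support_subset (hsupp _)).mpr
      (ih (r := (|r ·|)) (by simpa using hr))).summable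
    have h := Finsupp.hasSum_mul_erase a (G := {e | e.support ⊆ s}.indicator (multiPow r))
      (summable_norm_geometric_of_norm_lt_one (hr a)) <| habs.congr fun f => by
        by_cases hf : f.1.support ⊆ s <;> simp [hf, abs_multiPow]
    have hrest : ∑' f : {f : ι →₀ ℕ | f a = 0}, {e | e.support ⊆ s}.indicator (multiPow r) f =
        ∏ k ∈ s, (1 - r k)⁻¹ :=
      ((hasSum_subtype_iff_of_support_subset (hsupp r)).mpr (ih hr)).tsum_eq
    rw [Finset.prod_insert ha, funext hsplit]
    rwa [tsum_geometric_of_abs_lt_one (hr a), hrest] at h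

lemma summable_div_one_sub {ρ : ι → ℝ} (hρ0 : ∀ k, 0 ≤ ρ k) (hρ : Summable ρ) :
    Summable fun k => ρ k / (1 - ρ k) := by
  refine (hρ.mul_left 2).of_norm_bounded_eventually ?_
  filter_upwards [hρ.tendsto_cofinite_zero.eventually (gt_mem_nhds one_half_pos)] with k hk
  have h1 : 0 < 1 - ρ k := by linarith
  rw [Real.norm_of_nonneg (div_nonneg (hρ0 k) h1.le), div_le_iff₀ h1]
  nlinarith [hρ0 k]

lemma summable_multiPow {r : ι → ℝ} (hr : ∀ k, |r k| < 1) (hrs : Summable fun k => |r k|) :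
    Summable (multiPow r) := by
  classical
  refine Summable.of_norm (f := multiPow r) ?_
  simp_rw [Real.norm_eq_abs, abs_multiPow]
  have hnn (k : ι) : 0 ≤ |r k| / (1 - |r k|) := div_nonneg (abs_nonneg _) (by linarith [hr k])
  refine summable_of_sum_le (fun e => multiPow_nonneg (fun k => abs_nonneg _) e)
    (c := Real.exp (∑' k, |r k| / (1 - |r k|))) fun u => ?_
  set t := u.sup Finsupp.support
  have hu : ∀ e ∈ u, e ∈ {e : ι →₀ ℕ | e.support ⊆ t} :=
    fun e he => Finset.le_sup (f := Finsupp.support) he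
  calc ∑ e ∈ u, multiPow (|r ·|) e
      = ∑ e ∈ u, {e : ι →₀ ℕ | e.support ⊆ t}.indicator (multiPow (|r ·|)) e :=
        Finset.sum_congr rfl fun e he => (Set.indicator_of_mem (hu e he) _).symm
    _ ≤ ∏ k ∈ t, (1 - |r k|)⁻¹ :=
        sum_le_hasSum u (fun e _ => Set.indicator_nonneg (fun e _ => multiPow_nonneg
          (fun k => abs_nonneg _) e) e) (hasSum_indicator_multiPow t (by simpa using hr))
    _ = ∏ k ∈ t, (1 + |r k| / (1 - |r k|)) := Finset.prod_congr rfl fun k _ => by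
        have : 1 - |r k| ≠ 0 := by linarith [hr k]
        field_simp
        ring
    _ ≤ Real.exp (∑ k ∈ t, |r k| / (1 - |r k|)) := Real.prod_one_add_le_exp_sum _ hnn
    _ ≤ Real.exp (∑' k, |r k| / (1 - |r k|)) := Real.exp_le_exp.mpr <|
        (summable_div_one_sub (fun k => abs_nonneg _) hrs).sum_le_tsum _ fun k _ => hnn k

lemma summable_multiPow_abs {r : ι → ℝ} (hr : ∀ k, |r k| < 1) (hrs : Summable fun k => |r k|) :
    Summable (multiPow (|r ·|)) :=
  summable_multiPow (by simpa using hr) (by simpa using hrs)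

theorem hasProd_inv_one_sub {r : ι → ℝ} (hr : ∀ k, |r k| < 1) (hrs : Summable fun k => |r k|) :
    HasProd (fun k => (1 - r k)⁻¹) (∑' e, multiPow r e) := by
  have hlim := tendsto_tsum_of_dominated_convergence (𝓕 := atTop)
    (f := fun s => {e : ι →₀ ℕ | e.support ⊆ s}.indicator (multiPow r))
    (summable_multiPow_abs hr hrs)
    (fun e => tendsto_const_nhds.congr' <| (eventually_ge_atTop e.support).mono
      fun s hs => (Set.indicator_of_mem hs _).symm)
    (Eventually.of_forall fun s e => by
      by_cases he : e.support ⊆ s <;> simp [he, abs_multiPow, multiPow_nonneg])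
  simp_rw [fun s => (hasSum_indicator_multiPow s hr).tsum_eq] at hlim
  exact hlim

lemma hasSum_apply_mul_multiPow (r : ι → ℝ) (a : ι) {φ : ℕ → ℝ} {G : (ι →₀ ℕ) → ℝ}
    (hGa : ∀ e, G (e.erase a) = G e) (hφ : Summable fun m => |φ m| * |r a| ^ m)
    (hG : Summable fun e => |G e| * multiPow (|r ·|) e) :
    HasSum (fun e => φ (e a) * G e * multiPow r e)
      ((∑' m, φ m * r a ^ m) * ∑' f : {f : ι →₀ ℕ | f a = 0}, G f * multiPow r f) := by
  have hφn : Summable fun m => ‖φ m * r a ^ m‖ := by simpa [abs_mul, abs_pow] using hφ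
  have hGn : Summable fun f : {f : ι →₀ ℕ | f a = 0} => ‖G f * multiPow r f‖ :=
    (hG.subtype _).congr fun f => by simp [abs_multiPow]
  refine (Finsupp.hasSum_mul_erase a (φ := fun m => φ m * r a ^ m)
    (G := fun f => G f * multiPow r f) hφn hGn).congr_fun fun e => ?_
  rw [multiPow_eq_pow_mul_erase r e a, hGa]
  ring

section Moments

variable {r : ι → ℝ} {a : ι} {s : Finset ι} {G : (ι →₀ ℕ) → ℝ}

lemma summable_coe_apply_mul_multiPow (hr : |r a| < 1) (hGa : ∀ e, G (e.erase a) = G e)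
    (hG : Summable fun e => |G e| * multiPow (|r ·|) e) :
    Summable fun e => (e a : ℝ) * G e * multiPow r e :=
  (hasSum_apply_mul_multiPow r a (φ := (↑)) hGa
    (by simpa using summable_pow_mul_geometric_of_norm_lt_one 1 (r := |r a|) (by simpa using hr))
    hG).summable

lemma tsum_coe_apply_mul_multiPow (hr : |r a| < 1) (hGa : ∀ e, G (e.erase a) = G e)
    (hG : Summable fun e => |G e| * multiPow (|r ·|) e) :
    ∑' e, (e a : ℝ) * G e * multiPow r e = r a / (1 - r a) * ∑' e, G e * multiPow r e := by
  have h1 := hasSum_apply_mul_multiPow r a (φ := (↑)) hGa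
    (by simpa using summable_pow_mul_geometric_of_norm_lt_one 1 (r := |r a|) (by simpa using hr))
    hG
  have h0 := hasSum_apply_mul_multiPow r a (φ := fun _ => 1) hGa
    (by simpa using summable_geometric_of_lt_one (abs_nonneg _) hr) hG
  -- both sums factor through the same sum over `{f | f a = 0}`
  simp only [one_mul] at h0
  rw [h1.tsum_eq, h0.tsum_eq, tsum_coe_mul_geometric_of_norm_lt_one hr,
    tsum_geometric_of_abs_lt_one hr]
  have : 1 - r a ≠ 0 := by linarith [le_abs_self (r a)]
  field_simp

lemma summable_abs_sum_coe_apply_mul_multiPow (hr : ∀ k, |r k| < 1)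
    (hrs : Summable fun k => |r k|) (s : Finset ι) :
    Summable fun e => |∑ t ∈ s, (e t : ℝ)| * multiPow (|r ·|) e := by
  refine (summable_sum (s := s) fun t _ => summable_coe_apply_mul_multiPow (r := (|r ·|))
    (G := fun _ => 1) (by simpa using hr t) (fun _ => rfl)
    (by simpa using summable_multiPow_abs hr hrs)).congr fun e => ?_
  rw [abs_of_nonneg (Finset.sum_nonneg fun t _ => Nat.cast_nonneg (e t)), Finset.sum_mul]
  simp

lemma tsum_sum_coe_apply_mul_multiPow (hr : ∀ k, |r k| < 1) (hrs : Summable fun k => |r k|)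
    (s : Finset ι) :
    ∑' e, (∑ t ∈ s, (e t : ℝ)) * multiPow r e =
      (∑ t ∈ s, r t / (1 - r t)) * ∑' e, multiPow r e := by
  simp_rw [Finset.sum_mul]
  rw [Summable.tsum_finsetSum fun t _ => by simpa using (summable_coe_apply_mul_multiPow
    (G := fun _ => 1) (hr t) (fun _ => rfl) (by simpa using summable_multiPow_abs hr hrs))]
  refine Finset.sum_congr rfl fun t _ => ?_
  simpa using tsum_coe_apply_mul_multiPow (G := fun _ => 1) (hr t) (fun _ => rfl)
    (by simpa using summable_multiPow_abs hr hrs)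

lemma sum_coe_erase_apply (ha : a ∉ s) (e : ι →₀ ℕ) :
    ∑ t ∈ s, ((e.erase a) t : ℝ) = ∑ t ∈ s, (e t : ℝ) :=
  Finset.sum_congr rfl fun t ht => by rw [Finsupp.erase_ne (ne_of_mem_of_not_mem ht ha)]

lemma summable_coe_apply_mul_sum_mul_multiPow (hr : ∀ k, |r k| < 1)
    (hrs : Summable fun k => |r k|) (ha : a ∉ s) :
    Summable fun e => (e a : ℝ) * (∑ t ∈ s, (e t : ℝ)) * multiPow r e :=
  summable_coe_apply_mul_multiPow (hr a) (sum_coe_erase_apply ha)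
    (summable_abs_sum_coe_apply_mul_multiPow hr hrs s)

lemma tsum_coe_apply_mul_sum_mul_multiPow (hr : ∀ k, |r k| < 1)
    (hrs : Summable fun k => |r k|) (ha : a ∉ s) :
    ∑' e, (e a : ℝ) * (∑ t ∈ s, (e t : ℝ)) * multiPow r e =
      r a / (1 - r a) * (∑ t ∈ s, r t / (1 - r t)) * ∑' e, multiPow r e := by
  rw [tsum_coe_apply_mul_multiPow (hr a) (sum_coe_erase_apply ha)
    (summable_abs_sum_coe_apply_mul_multiPow hr hrs s), tsum_sum_coe_apply_mul_multiPow hr hrs,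
    mul_assoc]

lemma summable_uncurry_coe_apply_mul_sum_mul_multiPow {κ : Type*} (hr : ∀ k, |r k| < 1)
    (hrs : Summable fun k => |r k|) {a : κ → ι} {s : κ → Finset ι} (ha : ∀ l, a l ∉ s l)
    (c : κ → ℝ) (hc : Summable fun l =>
      |c l| * (|r (a l)| / (1 - |r (a l)|) * ∑ t ∈ s l, |r t| / (1 - |r t|))) :
    Summable (Function.uncurry fun (e : ι →₀ ℕ) l =>
      c l * ((e (a l) : ℝ) * (∑ t ∈ s l, (e t : ℝ)) * multiPow r e)) := by
  have hr' : ∀ k, |(|r k|)| < 1 := by simpa using hr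
  have hrs' : Summable fun k => |(|r k|)| := by simpa using hrs
  set G : κ × (ι →₀ ℕ) → ℝ := fun p =>
    |c p.1| * ((p.2 (a p.1) : ℝ) * (∑ t ∈ s p.1, (p.2 t : ℝ)) * multiPow (|r ·|) p.2)
  have hG0 : 0 ≤ G := fun p => by
    have := multiPow_nonneg (fun k => abs_nonneg (r k)) p.2
    positivity
  have hcol (l : κ) : Summable fun e => G (l, e) :=
    (summable_coe_apply_mul_sum_mul_multiPow hr' hrs' (ha l)).mul_left |c l|
  have hrow : Summable fun l => ∑' e, G (l, e) := by
    refine (hc.mul_right (∑' e, multiPow (|r ·|) e)).congr fun l => ?_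
    simp only [G]
    rw [tsum_mul_left, tsum_coe_apply_mul_sum_mul_multiPow hr' hrs' (ha l)]
    ring
  refine ((Equiv.prodComm _ _).summable_iff.mpr
    ((summable_prod_of_nonneg hG0).mpr ⟨hcol, hrow⟩)).of_norm_bounded fun ⟨e, l⟩ => le_of_eq ?_
  simp [G, abs_multiPow, abs_of_nonneg
    (sum_nonneg fun t _ => Nat.cast_nonneg (e t) : (0 : ℝ) ≤ ∑ t ∈ s l, (e t : ℝ))]

end Moments

end MultiPow

section TailSum

def tailSum (e : ℕ →₀ ℕ) (k : ℕ) : ℕ := e.sum fun t m => if k ≤ t then m else 0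

lemma tailSum_eq_add (e : ℕ →₀ ℕ) (k : ℕ) : tailSum e k = e k + tailSum e (k + 1) := by
  rw [tailSum, tailSum, ← Finsupp.sum_ite_self_eq' e k, ← Finsupp.sum_add]
  refine Finsupp.sum_congr fun t _ => ?_
  split_ifs <;> omega

lemma tailSum_antitone (e : ℕ →₀ ℕ) : Antitone (tailSum e) :=
  antitone_nat_of_succ_le fun k => (tailSum_eq_add e k).symm ▸ Nat.le_add_left _ _

lemma tailSum_eq_zero {e : ℕ →₀ ℕ} {M k : ℕ} (hM : e.support ⊆ range M) (hk : M ≤ k) :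
    tailSum e k = 0 :=
  Finset.sum_eq_zero fun t ht => if_neg (by have := mem_range.mp (hM ht); omega)

lemma tailSum_zero_eq (e : ℕ →₀ ℕ) (l : ℕ) : tailSum e 0 = ∑ t ∈ range l, e t + tailSum e l := by
  induction l with
  | zero => simp
  | succ l ih => rw [ih, tailSum_eq_add e l, sum_range_succ]; ring

lemma sum_range_tailSum (e : ℕ →₀ ℕ) (M : ℕ) :
    ∑ k ∈ range M, tailSum e k = ∑ t ∈ range M, (t + 1) * e t + M * tailSum e M := by
  induction M with
  | zero => simp
  | succ M ih => rw [sum_range_succ, sum_range_succ, ih, tailSum_eq_add e M]; ring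

lemma tailSum_eq_of_apply_eq_sub {μ : ℕ → ℕ} (hμ : Antitone μ) {M : ℕ}
    (hM : ∀ k, M ≤ k → μ k = 0) {d : ℕ →₀ ℕ} (hd : ∀ t, d t = μ t - μ (t + 1)) (k : ℕ) :
    tailSum d k = μ k := by
  have hdM : d.support ⊆ range M := fun t ht => by
    by_contra h
    exact Finsupp.mem_support_iff.mp ht (by rw [hd, hM t (by simpa using h), Nat.zero_sub])
  suffices ∀ n k, M ≤ k + n → tailSum d k = μ k from this M k (Nat.le_add_left _ _)
  intro n
  induction n with
  | zero =>
    intro k hk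
    rw [Nat.add_zero] at hk
    rw [tailSum_eq_zero hdM hk, hM k hk]
  | succ n ih =>
    intro k hk
    rw [tailSum_eq_add, ih (k + 1) (by omega), hd]
    have : μ (k + 1) ≤ μ k := hμ (Nat.le_succ k)
    omega

lemma exists_tailSum_eq_zero (e : ℕ →₀ ℕ) : ∃ N, tailSum e N = 0 :=
  let ⟨M, hM⟩ := e.support.exists_nat_subset_range
  ⟨M, tailSum_eq_zero hM le_rfl⟩

end TailSum

section PartitionOfSeq

open Classical in
noncomputable def partitionOfSeq (μ : ℕ → ℕ) (h0 : ∃ N, μ N = 0) : Σ n, Nat.Partition n :=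
  ⟨∑ k ∈ range (Nat.find h0), μ k,
    { parts := (List.range (Nat.find h0)).map μ
      parts_pos := fun hi => by
        obtain ⟨k, hk, rfl⟩ := List.mem_map.mp (Multiset.mem_coe.mp hi)
        exact Nat.pos_of_ne_zero (Nat.find_min h0 (List.mem_range.mp hk))
      parts_sum := by
        rw [Finset.sum, Finset.range_val, Multiset.range, Multiset.map_coe, Multiset.sum_coe] }⟩

variable {μ : ℕ → ℕ} (h0 : ∃ N, μ N = 0)

lemma partOf_partitionOfSeq (hμ : Antitone μ) (k : ℕ) :
    partOf (partitionOfSeq μ h0).2 (k + 1) = μ k := by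
  classical
  have hsorted : ((List.range (Nat.find h0)).map μ).Pairwise (· ≥ ·) :=
    List.pairwise_map.mpr (List.pairwise_lt_range.imp fun h => hμ h.le)
  simp only [partOf, partitionOfSeq, Multiset.coe_sort, List.mergeSort_eq_self _ hsorted]
  rw [Nat.add_sub_cancel, List.getD_eq_getElem?_getD, List.getElem?_map]
  by_cases hk : k < Nat.find h0
  · simp [List.getElem?_range hk]
  · rw [List.getElem?_eq_none (by simpa using hk)]
    exact (Nat.le_zero.mp (Nat.find_spec h0 ▸ hμ (not_lt.mp hk))).symm

lemma partitionOfSeq_fst (hμ : Antitone μ) {M : ℕ} (hM : μ M = 0) :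
    (partitionOfSeq μ h0).1 = ∑ k ∈ range M, μ k := by
  classical
  refine Finset.sum_subset (range_subset_range.mpr (Nat.find_min' h0 hM)) fun k _ hk => ?_
  exact Nat.le_zero.mp (Nat.find_spec h0 ▸ hμ (not_lt.mp (mem_range.not.mp hk)))

end PartitionOfSeq

section PartOf

variable {n : ℕ} (p : Nat.Partition n)

lemma partOf_succ_antitone : Antitone fun k => partOf p (k + 1) := by
  refine antitone_nat_of_succ_le fun k => ?_
  simp only [partOf, Nat.add_sub_cancel]
  set L := p.parts.sort (· ≥ ·)
  by_cases hk : k + 1 < L.length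
  · rw [List.getD_eq_getElem _ _ hk, List.getD_eq_getElem _ _ (by omega)]
    exact List.pairwise_iff_getElem.mp (Multiset.pairwise_sort _ _) k (k + 1) _ hk k.lt_succ_self
  · rw [List.getD_eq_default _ _ (not_lt.mp hk)]
    exact Nat.zero_le _

lemma partOf_succ_eq_zero {k : ℕ} (hk : Multiset.card p.parts ≤ k) : partOf p (k + 1) = 0 :=
  List.getD_eq_default _ _ (by simpa using hk)

lemma getElem?_sort_parts (k : ℕ) : (p.parts.sort (· ≥ ·))[k]? =
    if partOf p (k + 1) = 0 then none else some (partOf p (k + 1)) := by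
  simp only [partOf, Nat.add_sub_cancel, List.getD_eq_getElem?_getD]
  cases h : (p.parts.sort (· ≥ ·))[k]? with
  | none => simp
  | some v =>
    have hv : 0 < v := p.parts_pos ((Multiset.mem_sort _).mp (List.mem_of_getElem? h))
    simp [hv.ne']

end PartOf

lemma Nat.Partition.sigma_ext_partOf {x y : Σ n, Nat.Partition n}
    (h : ∀ k, partOf x.2 (k + 1) = partOf y.2 (k + 1)) : x = y := by
  obtain ⟨n, p⟩ := x
  obtain ⟨m, p'⟩ := y
  have hparts : p.parts = p'.parts := by
    have hsort : p.parts.sort (· ≥ ·) = p'.parts.sort (· ≥ ·) :=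
      List.ext_getElem? fun k => by rw [getElem?_sort_parts, getElem?_sort_parts, h k]
    rw [← Multiset.sort_eq p.parts (· ≥ ·), hsort, Multiset.sort_eq]
  obtain rfl : n = m := by rw [← p.parts_sum, ← p'.parts_sum, hparts]
  exact congrArg _ (Nat.Partition.ext hparts)

noncomputable def partitionEquiv : (ℕ →₀ ℕ) ≃ Σ n, Nat.Partition n where
  toFun e := partitionOfSeq (tailSum e) (exists_tailSum_eq_zero e)
  invFun x := Finsupp.onFinset (range (Multiset.card x.2.parts))
    (fun t => partOf x.2 (t + 1) - partOf x.2 (t + 2)) fun t ht => by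
      by_contra h
      exact ht (by rw [partOf_succ_eq_zero x.2 (by simpa using h), Nat.zero_sub])
  left_inv e := Finsupp.ext fun t => by
    simp [partOf_partitionOfSeq _ (tailSum_antitone e), tailSum_eq_add e t]
  right_inv x := Nat.Partition.sigma_ext_partOf fun k => by
    rw [partOf_partitionOfSeq _ (tailSum_antitone _)]
    exact tailSum_eq_of_apply_eq_sub (partOf_succ_antitone x.2)
      (fun k hk => partOf_succ_eq_zero x.2 hk) (fun t => rfl) k

lemma partOf_partitionEquiv (e : ℕ →₀ ℕ) (k : ℕ) :
    partOf (partitionEquiv e).2 (k + 1) = tailSum e k :=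
  partOf_partitionOfSeq _ (tailSum_antitone e) k

lemma partitionEquiv_fst (e : ℕ →₀ ℕ) : (partitionEquiv e).1 = e.sum fun t m => (t + 1) * m := by
  obtain ⟨M, hM⟩ := e.support.exists_nat_subset_range
  rw [Finsupp.sum_of_support_subset e hM _ (fun _ _ => mul_zero _)]
  have := sum_range_tailSum e M
  rw [tailSum_eq_zero hM le_rfl, mul_zero, add_zero] at this
  rw [← this]
  exact partitionOfSeq_fst _ (tailSum_antitone e) (tailSum_eq_zero hM le_rfl)

lemma tsum_mul_sum_range_eq_tsum_mul_tsum {u v : ℕ → ℝ} (hu : ∀ k, 0 ≤ u k) (hv : ∀ l, 0 ≤ v l)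
    (hus : Summable u) (hvs : Summable v) :
    ∑' l, v l * ∑ k ∈ range l, u k = ∑' k, u k * ∑' j, v (k + j + 1) := by
  set F : ℕ × ℕ → ℝ := fun p => if p.1 < p.2 then u p.1 * v p.2 else 0
  have huv : ∀ k l, 0 ≤ u k * v l := fun k l => mul_nonneg (hu k) (hv l)
  have hF0 : 0 ≤ F := fun p => by dsimp only [F]; split_ifs <;> [exact huv _ _; exact le_rfl]
  have hFle : ∀ k l, F (k, l) ≤ u k * v l := fun k l => by
    dsimp only [F]; split_ifs <;> [exact le_rfl; exact huv _ _]
  have hrow : ∀ k, Summable fun l => F (k, l) := fun k =>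
    (hvs.mul_left (u k)).of_nonneg_of_le (fun l => hF0 _) (hFle k)
  have hF : Summable F := (summable_prod_of_nonneg hF0).mpr ⟨hrow,
    (hus.mul_right (∑' l, v l)).of_nonneg_of_le (fun k => tsum_nonneg fun l => hF0 _)
      fun k => by
        rw [← tsum_mul_left]
        exact (hrow k).tsum_le_tsum (hFle k) (hvs.mul_left (u k))⟩
  have hrow_sum : ∀ k, ∑' l, F (k, l) = u k * ∑' j, v (k + j + 1) := fun k => by
    rw [← (hrow k).sum_add_tsum_nat_add (k + 1),
      Finset.sum_eq_zero fun l hl => if_neg (by simpa using hl), zero_add, ← tsum_mul_left]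
    exact tsum_congr fun j => by
      simp only [F, if_pos (by omega : k < j + (k + 1))]
      ring_nf
  have hcol_sum : ∀ l, ∑' k, F (k, l) = v l * ∑ k ∈ range l, u k := fun l => by
    rw [tsum_eq_sum (s := range l) fun k hk => if_neg (by simpa using hk), Finset.mul_sum]
    exact Finset.sum_congr rfl fun k hk => by simp only [if_pos (mem_range.mp hk)]; ring
  calc ∑' l, v l * ∑ k ∈ range l, u k = ∑' l, ∑' k, F (k, l) :=
        tsum_congr fun l => (hcol_sum l).symm
    _ = ∑' k, ∑' l, F (k, l) := Summable.tsum_comm (f := fun k l => F (k, l)) hF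
    _ = _ := tsum_congr hrow_sum

section Identity

variable {q : ℝ}

lemma abs_neg_pow_succ (hq0 : 0 ≤ q) (k : ℕ) : |-q ^ (k + 1)| = q ^ (k + 1) := by
  rw [abs_neg, abs_of_nonneg (pow_nonneg hq0 _)]

lemma abs_neg_pow_succ_lt_one (hq0 : 0 ≤ q) (hq1 : q < 1) (k : ℕ) : |-q ^ (k + 1)| < 1 := by
  rw [abs_neg_pow_succ hq0]
  exact pow_lt_one₀ hq0 hq1 k.succ_ne_zero

lemma summable_abs_neg_pow_succ (hq0 : 0 ≤ q) (hq1 : q < 1) :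
    Summable fun k : ℕ => |-q ^ (k + 1)| := by
  simp_rw [abs_neg_pow_succ hq0, pow_succ]
  exact (summable_geometric_of_lt_one hq0 hq1).mul_right q

lemma tprod_inv_one_add_pow (hq0 : 0 ≤ q) (hq1 : q < 1) :
    ∏' j : ℕ, (1 + q ^ (j + 1))⁻¹ = ∑' e, multiPow (fun k => -q ^ (k + 1)) e := by
  simpa using (hasProd_inv_one_sub (abs_neg_pow_succ_lt_one hq0 hq1)
    (summable_abs_neg_pow_succ hq0 hq1)).tprod_eq

lemma multiPow_neg_pow_succ (e : ℕ →₀ ℕ) :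
    multiPow (fun k => -q ^ (k + 1)) e = (-1) ^ tailSum e 0 * q ^ (partitionEquiv e).1 := by
  have htail : tailSum e 0 = e.sum fun _ m => m := by simp [tailSum]
  rw [partitionEquiv_fst, multiPow, htail, Finsupp.sum, Finsupp.sum, ← prod_pow_eq_pow_sum,
    ← prod_pow_eq_pow_sum, ← prod_mul_distrib]
  exact prod_congr rfl fun k _ => by beta_reduce; rw [neg_pow, pow_mul]

noncomputable def partitionSummand (q : ℝ) (e : ℕ →₀ ℕ) (l : ℕ) : ℝ :=
  (q ^ (l + 1))⁻¹ *
    ((e (2 * l) : ℝ) * (∑ t ∈ range l, (e t : ℝ)) * multiPow (fun k => -q ^ (k + 1)) e)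

lemma term_partitionEquiv_eq_tsum_partitionSummand (hq0 : 0 < q) (e : ℕ →₀ ℕ) :
    (-1 : ℝ) ^ partOf (partitionEquiv e).2 1 *
      ∑' l : ℕ, q ^ (((partitionEquiv e).1 : ℤ) - ((l : ℤ) + 1)) *
        ((partOf (partitionEquiv e).2 (2 * (l + 1) - 1) : ℝ) -
          (partOf (partitionEquiv e).2 (2 * (l + 1)) : ℝ)) *
        ((partOf (partitionEquiv e).2 1 : ℝ) - (partOf (partitionEquiv e).2 (l + 1) : ℝ)) =
      ∑' l : ℕ, partitionSummand q e l := by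
  rw [← tsum_mul_left]
  refine tsum_congr fun l => ?_
  have hfirst : partOf (partitionEquiv e).2 1 = tailSum e 0 := partOf_partitionEquiv e 0
  have hodd : (tailSum e (2 * l) : ℝ) - tailSum e (2 * l + 1) = e (2 * l) := by
    rw [tailSum_eq_add e (2 * l)]; push_cast; ring
  have hhead : (tailSum e 0 : ℝ) - tailSum e l = ∑ t ∈ range l, (e t : ℝ) := by
    rw [tailSum_zero_eq e l]; push_cast; ring
  rw [show 2 * (l + 1) - 1 = 2 * l + 1 by omega, show 2 * (l + 1) = 2 * l + 1 + 1 by ring,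
    hfirst, partOf_partitionEquiv, partOf_partitionEquiv, partOf_partitionEquiv, hodd, hhead,
    partitionSummand, multiPow_neg_pow_succ, zpow_sub₀ hq0.ne', zpow_natCast, ← Nat.cast_add_one,
    zpow_natCast]
  ring

lemma tsum_partitionSummand (hq0 : 0 < q) (hq1 : q < 1) (l : ℕ) :
    ∑' e, partitionSummand q e l =
      (∑' e, multiPow (fun k => -q ^ (k + 1)) e) *
        (q ^ l / (1 + q ^ (2 * l + 1)) * ∑ t ∈ range l, q ^ (t + 1) / (1 + q ^ (t + 1))) := by
  simp only [partitionSummand]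
  rw [tsum_mul_left, tsum_coe_apply_mul_sum_mul_multiPow (abs_neg_pow_succ_lt_one hq0.le hq1)
    (summable_abs_neg_pow_succ hq0.le hq1) (by simp; omega : 2 * l ∉ range l)]
  simp only [sub_neg_eq_add, neg_div, sum_neg_distrib]
  rw [show q ^ (2 * l + 1) = q ^ (l + 1) * q ^ l by ring]
  have : 1 + q ^ (l + 1) * q ^ l ≠ 0 := by positivity
  field_simp

lemma summable_pow_div_mul_sum (hq0 : 0 < q) (hq1 : q < 1) :
    Summable fun l : ℕ => |(q ^ (l + 1))⁻¹| * (q ^ (2 * l + 1) / (1 - q ^ (2 * l + 1)) *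
      ∑ t ∈ range l, q ^ (t + 1) / (1 - q ^ (t + 1))) := by
  have hu := summable_div_one_sub (fun t => pow_nonneg hq0.le (t + 1))
    ((summable_geometric_of_lt_one hq0.le hq1).mul_left q |>.congr fun t => (pow_succ' q t).symm)
  have hu0 (t : ℕ) : 0 ≤ q ^ (t + 1) / (1 - q ^ (t + 1)) :=
    div_nonneg (by positivity) (sub_nonneg.mpr (pow_le_one₀ hq0.le hq1.le))
  refine ((summable_geometric_of_lt_one hq0.le hq1).mul_right
    ((∑' t, q ^ (t + 1) / (1 - q ^ (t + 1))) / (1 - q))).of_nonneg_of_le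
    (fun l => mul_nonneg (abs_nonneg _) (mul_nonneg (hu0 _) (sum_nonneg fun t _ => hu0 t)))
    fun l => ?_
  have hv : (q ^ (l + 1))⁻¹ * (q ^ (2 * l + 1) / (1 - q ^ (2 * l + 1))) ≤ q ^ l / (1 - q) := by
    have hq2 : q ^ (2 * l + 1) ≤ q := pow_le_of_le_one hq0.le hq1.le (by omega)
    rw [show q ^ (2 * l + 1) = q ^ (l + 1) * q ^ l by ring] at hq2 ⊢
    rw [mul_div_assoc', inv_mul_cancel_left₀ (by positivity)]
    exact div_le_div_of_nonneg_left (by positivity) (by linarith) (by linarith)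
  calc |(q ^ (l + 1))⁻¹| * (q ^ (2 * l + 1) / (1 - q ^ (2 * l + 1)) *
        ∑ t ∈ range l, q ^ (t + 1) / (1 - q ^ (t + 1)))
      = (q ^ (l + 1))⁻¹ * (q ^ (2 * l + 1) / (1 - q ^ (2 * l + 1))) *
        ∑ t ∈ range l, q ^ (t + 1) / (1 - q ^ (t + 1)) := by
        rw [abs_of_pos (by positivity), mul_assoc]
    _ ≤ q ^ l / (1 - q) * ∑' t, q ^ (t + 1) / (1 - q ^ (t + 1)) :=
        mul_le_mul hv (hu.sum_le_tsum _ fun t _ => hu0 t) (sum_nonneg fun t _ => hu0 t)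
          (div_nonneg (by positivity) (by linarith))
    _ = q ^ l * ((∑' t, q ^ (t + 1) / (1 - q ^ (t + 1))) / (1 - q)) := by ring

lemma summable_partitionSummand (hq0 : 0 < q) (hq1 : q < 1) :
    Summable (Function.uncurry (partitionSummand q)) :=
  summable_uncurry_coe_apply_mul_sum_mul_multiPow (abs_neg_pow_succ_lt_one hq0.le hq1)
    (summable_abs_neg_pow_succ hq0.le hq1) (fun l => by simp; omega) _
    (by simpa [abs_neg_pow_succ hq0.le] using summable_pow_div_mul_sum hq0 hq1)

theorem partition_identity (hq0 : 0 < q) (hq1 : q < 1) :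
    (∏' j : ℕ, (1 + q ^ (j + 1))⁻¹) *
      (∑' k : ℕ, q ^ (k + 1) / (1 + q ^ (k + 1)) *
        ∑' j : ℕ, q ^ (k + j + 1) / (1 + q ^ (2 * (k + j + 2) - 1)))
    = ∑' x : (Σ n : ℕ, Nat.Partition n), (-1 : ℝ) ^ (partOf x.2 1) *
        ∑' l : ℕ, q ^ ((x.1 : ℤ) - ((l : ℤ) + 1)) *
          ((partOf x.2 (2 * (l + 1) - 1) : ℝ) - (partOf x.2 (2 * (l + 1)) : ℝ)) *
          ((partOf x.2 1 : ℝ) - (partOf x.2 (l + 1) : ℝ)) := by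
  have hu : Summable fun t : ℕ => q ^ (t + 1) / (1 + q ^ (t + 1)) :=
    (summable_abs_neg_pow_succ hq0.le hq1).of_nonneg_of_le (fun t => by positivity) fun t => by
      rw [abs_neg_pow_succ hq0.le]; exact div_le_self (by positivity) (by simp [pow_nonneg hq0.le])
  have hv : Summable fun l : ℕ => q ^ l / (1 + q ^ (2 * l + 1)) :=
    (summable_geometric_of_lt_one hq0.le hq1).of_nonneg_of_le (fun l => by positivity) fun l =>
      div_le_self (by positivity) (by simp [pow_nonneg hq0.le])
  rw [← partitionEquiv.tsum_eq, tsum_congr (term_partitionEquiv_eq_tsum_partitionSummand hq0),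
    ← (summable_partitionSummand hq0 hq1).tsum_comm, tsum_congr (tsum_partitionSummand hq0 hq1),
    tsum_mul_left, tprod_inv_one_add_pow hq0.le hq1,
    tsum_mul_sum_range_eq_tsum_mul_tsum (fun t => by positivity) (fun l => by positivity) hu hv]
  congr! 5 with k j

end Identity

/-- For `q = e^{−1}`:
`∏_{j≥1} 1/(1+q^j) · ( Σ_{k≥1} (q^k/(1+q^k)) Σ_{ℓ>k} q^{ℓ−1}/(1+q^{2ℓ−1}) )
 = Σ_{λ ∈ P} (−1)^{λ_1} Σ_{ℓ≥1} q^{|λ|−ℓ} (λ_{2ℓ−1} − λ_{2ℓ})(λ_1 − λ_ℓ)`,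
where the right-hand sum runs over all partitions of all nonnegative integers.
The inner sum over `ℓ > k` is parametrized by `ℓ = k + j + 2` with `j ≥ 0`
(and `k` ranging over `k + 1`, `k ≥ 0`); `q^{|λ|−ℓ}` is an integer power
(`zpow`, legitimate since `q > 0`). -/
theorem relY_partition_identity :
    (∏' j : ℕ, (1 + Real.exp (-1) ^ (j + 1))⁻¹) *
      (∑' k : ℕ, Real.exp (-1) ^ (k + 1) / (1 + Real.exp (-1) ^ (k + 1)) *
        ∑' j : ℕ, Real.exp (-1) ^ (k + j + 1) / (1 + Real.exp (-1) ^ (2 * (k + j + 2) - 1)))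
    = ∑' x : (Σ n : ℕ, Nat.Partition n), (-1 : ℝ) ^ (partOf x.2 1) *
        ∑' l : ℕ, Real.exp (-1) ^ ((x.1 : ℤ) - ((l : ℤ) + 1)) *
          ((partOf x.2 (2 * (l + 1) - 1) : ℝ) - (partOf x.2 (2 * (l + 1)) : ℝ)) *
          ((partOf x.2 1 : ℝ) - (partOf x.2 (l + 1) : ℝ)) :=
  partition_identity (Real.exp_pos _) (Real.exp_lt_one_iff.mpr (by norm_num))
end

section
/- For every nonzero complex number q with |q| < 1, Σ_{m≥1} Σ_{n≥1} (−1)^{m−1} q^{2mn} (q^{−m} − q^{m−1}) / ((1+q^{2n−1})(1−q^{2m−1})) = Σ_{n≥1} q^{2n−1}/(1+q^{2n−1})^2. -/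
/-!
Writing `x = q ^ (2n - 1)`, the factor `1 - q ^ (2m - 1)` cancels and the `(m, n)` term becomes
`(-1) ^ (m - 1) * x ^ m / (1 + x)`. These terms are dominated by
`‖q‖ ^ (m - 1) * ‖q‖ ^ (2n - 1) / (1 - ‖q‖)`, so the double sum may be taken over `m` first, where it is the geometric series
`x / (1 + x) * ∑ (-x) ^ k = x / (1 + x) ^ 2`.
-/

section NormedField

variable {𝕜 : Type*} [NormedField 𝕜]

lemma one_sub_norm_le_norm_one_add (x : 𝕜) : 1 - ‖x‖ ≤ ‖1 + x‖ := by
  simpa using norm_sub_norm_le (1 : 𝕜) (-x)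

lemma hasSum_neg_one_pow_mul_pow_succ_div_one_add {x : 𝕜} (hx : ‖x‖ < 1) :
    HasSum (fun m : ℕ ↦ (-1) ^ m * x ^ (m + 1) / (1 + x)) (x / (1 + x) ^ 2) := by
  have hterm : (fun m : ℕ ↦ (-1) ^ m * x ^ (m + 1) / (1 + x)) = fun m ↦ x / (1 + x) * (-x) ^ m := by
    ext m; rw [neg_pow]; ring
  have hgeom := (hasSum_geometric_of_norm_lt_one (ξ := -x) (by simpa using hx)).mul_left (x / (1 + x))
  rw [sub_neg_eq_add, ← div_eq_mul_inv, div_div, ← sq] at hgeom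
  rwa [hterm]

variable [CompleteSpace 𝕜]

lemma summable_uncurry_neg_one_pow_mul_pow_succ_div_one_add {x : ℕ → 𝕜} {ρ : ℝ}
    (hρ : ρ < 1) (hx : ∀ n, ‖x n‖ ≤ ρ) (hsum : Summable fun n ↦ ‖x n‖) :
    Summable (Function.uncurry fun m n ↦ (-1) ^ m * x n ^ (m + 1) / (1 + x n)) := by
  have hρ₀ : 0 ≤ ρ := (norm_nonneg _).trans (hx 0)
  have hmaj : Summable fun p : ℕ × ℕ ↦ ρ ^ p.1 * (‖x p.2‖ / (1 - ρ)) :=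
    (summable_geometric_of_lt_one hρ₀ hρ).mul_of_nonneg (hsum.div_const _)
      (fun m ↦ pow_nonneg hρ₀ m) fun n ↦ div_nonneg (norm_nonneg _) (by linarith)
  refine .of_norm_bounded hmaj fun ⟨m, n⟩ ↦ ?_
  have hden : 1 - ρ ≤ ‖1 + x n‖ := (sub_le_sub_left (hx n) 1).trans (one_sub_norm_le_norm_one_add _)
  have hpow : ‖x n‖ ^ m ≤ ρ ^ m := pow_le_pow_left₀ (norm_nonneg _) (hx n) m
  simp only [Function.uncurry_apply_pair, norm_div, norm_mul, norm_pow, norm_neg, norm_one,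
    one_pow, one_mul, pow_succ]
  rw [mul_div_assoc]
  exact mul_le_mul hpow (div_le_div_of_nonneg_left (norm_nonneg _) (by linarith) hden)
    (by positivity) (pow_nonneg hρ₀ m)

lemma tsum_tsum_neg_one_pow_mul_pow_succ_div_one_add {x : ℕ → 𝕜} {ρ : ℝ}
    (hρ : ρ < 1) (hx : ∀ n, ‖x n‖ ≤ ρ) (hsum : Summable fun n ↦ ‖x n‖) :
    ∑' m : ℕ, ∑' n, (-1) ^ m * x n ^ (m + 1) / (1 + x n) = ∑' n, x n / (1 + x n) ^ 2 := by
  rw [← (summable_uncurry_neg_one_pow_mul_pow_succ_div_one_add hρ hx hsum).tsum_comm]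
  exact tsum_congr fun n ↦ (hasSum_neg_one_pow_mul_pow_succ_div_one_add ((hx n).trans_lt hρ)).tsum_eq

end NormedField

lemma theta3_summand_eq {K : Type*} [Field K] {q : K} (m n : ℕ) (hm : 1 - q ^ (2 * m + 1) ≠ 0) :
    (-1 : K) ^ m * q ^ (2 * (m + 1) * (n + 1)) * (q ^ (-((m : ℤ) + 1)) - q ^ (((m : ℤ) + 1) - 1))
        / ((1 + q ^ (2 * n + 1)) * (1 - q ^ (2 * m + 1)))
      = (-1) ^ m * (q ^ (2 * n + 1)) ^ (m + 1) / (1 + q ^ (2 * n + 1)) := by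
  -- `zpow_add'` needs no `q ≠ 0`, since the total exponent `(m + 1) * (2 * n + 1)` is nonzero.
  have hzpow : q ^ (2 * (m + 1) * (n + 1)) * q ^ (-((m : ℤ) + 1)) = (q ^ (2 * n + 1)) ^ (m + 1) := by
    rw [← zpow_natCast, ← zpow_add' (.inr (.inl (by push_cast; ring_nf; positivity))), ← pow_mul,
      ← zpow_natCast]
    push_cast; ring_nf
  have hnum : q ^ (2 * (m + 1) * (n + 1)) * (q ^ (-((m : ℤ) + 1)) - q ^ (((m : ℤ) + 1) - 1))
      = (q ^ (2 * n + 1)) ^ (m + 1) * (1 - q ^ (2 * m + 1)) := by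
    rw [mul_sub, hzpow, add_sub_cancel_right, zpow_natCast]
    ring
  rw [mul_assoc, hnum, ← mul_assoc, mul_div_mul_right _ _ hm]

theorem theta3_log_derivative_identity_general (q : ℂ) (hq : ‖q‖ < 1) :
    ∑' m : ℕ, ∑' n : ℕ,
        (-1 : ℂ) ^ m * q ^ (2 * (m + 1) * (n + 1))
          * (q ^ (-((m : ℤ) + 1)) - q ^ (((m : ℤ) + 1) - 1))
          / ((1 + q ^ (2 * (n + 1) - 1)) * (1 - q ^ (2 * (m + 1) - 1)))
    = ∑' n : ℕ, q ^ (2 * (n + 1) - 1) / (1 + q ^ (2 * (n + 1) - 1)) ^ 2 := by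
  have hodd : ∀ k : ℕ, ‖q ^ (2 * k + 1)‖ ≤ ‖q‖ := fun k ↦ by
    rw [norm_pow]
    exact pow_le_of_le_one (norm_nonneg q) hq.le (by omega)
  have hsum : Summable fun n : ℕ ↦ ‖q ^ (2 * n + 1)‖ := by
    have hq2 : ‖q‖ ^ 2 < 1 := pow_lt_one₀ (norm_nonneg q) hq (by norm_num)
    simpa [norm_pow, pow_succ, pow_mul] using
      (summable_geometric_of_lt_one (by positivity) hq2).mul_right ‖q‖
  have hsub : ∀ m : ℕ, 1 - q ^ (2 * m + 1) ≠ 0 := fun m ↦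
    sub_ne_zero.2 fun h ↦ by simpa [← h] using (hodd m).trans_lt hq
  simp only [show ∀ k : ℕ, 2 * (k + 1) - 1 = 2 * k + 1 from fun k ↦ by omega]
  simp only [theta3_summand_eq _ _ (hsub _)]
  exact tsum_tsum_neg_one_pow_mul_pow_succ_div_one_add hq hodd hsum

/-- `Σ_{m,n≥1} (−1)^{m−1} q^{2mn} (q^{−m} − q^{m−1}) / ((1+q^{2n−1})(1−q^{2m−1}))
      = Σ_{n≥1} q^{2n−1}/(1+q^{2n−1})^2`,
where `q^{−m}` and `q^{m−1}` are integer powers (`zpow`), legitimate since `q ≠ 0`. -/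
theorem theta3_log_derivative_identity (q : ℂ) (hq : ‖q‖ < 1) (hq0 : q ≠ 0) :
    ∑' m : ℕ, ∑' n : ℕ,
        (-1 : ℂ) ^ m * q ^ (2 * (m + 1) * (n + 1))
          * (q ^ (-((m : ℤ) + 1)) - q ^ (((m : ℤ) + 1) - 1))
          / ((1 + q ^ (2 * (n + 1) - 1)) * (1 - q ^ (2 * (m + 1) - 1)))
    = ∑' n : ℕ, q ^ (2 * (n + 1) - 1) / (1 + q ^ (2 * (n + 1) - 1)) ^ 2 :=
  theta3_log_derivative_identity_general q hq
end
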